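/- arXiv:1910.10286 — 14 statements merged into one kernel-verified Lean document; each statement's English description precedes it below -/
import Mathlib

section
/- A semigroup S is a rectangular group if and only if every element of S is regular and the set E(S) of idempotents of S is a rectangular band, i.e., E(S) is closed under multiplication and e·f·e = e for all e, f ∈ E(S). -/
universe u

/-- A witness that the semigroup `S` is a rectangular group: an isomorphism of `S` with a
direct product `U × V × G` of a left-zero semigroup `U`, a right-zero semigroup `V`
and a group `G`. -/
structure RectangularGroupWitness (S : Type u) [Mul S] where
  U : Type u
  V : Type u
  G : Type u
  [semU : Semigroup U]
  [semV : Semigroup V]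
  [grpG : Group G]
  left_zero : ∀ x y : U, x * y = x
  right_zero : ∀ x y : V, x * y = y
  iso : S ≃* U × V × G

/-- `S` is a rectangular group if it is isomorphic to `U × V × G` with `U` left-zero,
`V` right-zero and `G` a group. -/
def IsRectangularGroup (S : Type u) [Mul S] : Prop :=
  Nonempty (RectangularGroupWitness S)

/-!
Fix an idempotent `e` (one exists: `x = x * u * x` makes `x * u` idempotent). Let `L` be the
idempotents `a` with `a * e = a`, with left-zero multiplication, `R` the idempotents `b` with
`e * b = b`, with right-zero multiplication, and `G` the group of units of the corner monoid
`e S e`. Because `E(S)` is a rectangular band, `b * a = e` for `b ∈ R`, `a ∈ L`, so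
`(a, b, g) ↦ a * g * b` is multiplicative; it is injective because `g = e (a g b) e`,
`a = (a g b) g⁻¹` and `b = g⁻¹ (a g b)`. Inside the corner, `e` is the only idempotent and every
element is regular, so every element is a unit; this gives surjectivity, as
`s = (s u e) (e s e) (e u s)` when `s = s u s`.
-/

section

attribute [local instance] RectangularGroupWitness.semU RectangularGroupWitness.semV
  RectangularGroupWitness.grpG

variable {S : Type u} [Semigroup S]

theorem RectangularGroupWitness.iso_snd_snd_eq_one (w : RectangularGroupWitness S) {e : S}
    (he : IsIdempotentElem e) : (w.iso e).2.2 = 1 :=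
  mul_eq_left.mp (congrArg (fun p => p.2.2) (he.map w.iso))

theorem IsRectangularGroup.exists_eq_mul_mul (h : IsRectangularGroup S) (x : S) :
    ∃ u : S, x = x * u * x := by
  obtain ⟨w⟩ := h
  refine ⟨w.iso.symm ((w.iso x).1, (w.iso x).2.1, (w.iso x).2.2⁻¹), w.iso.injective ?_⟩
  ext <;> simp [w.left_zero, w.right_zero]

theorem IsRectangularGroup.isIdempotentElem_mul (h : IsRectangularGroup S) {e f : S}
    (he : IsIdempotentElem e) (hf : IsIdempotentElem f) : IsIdempotentElem (e * f) := by
  obtain ⟨w⟩ := h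
  refine w.iso.injective ?_
  ext <;> simp [w.left_zero, w.right_zero, w.iso_snd_snd_eq_one he, w.iso_snd_snd_eq_one hf]

theorem IsRectangularGroup.mul_mul_eq_self (h : IsRectangularGroup S) {e f : S}
    (he : IsIdempotentElem e) (hf : IsIdempotentElem f) : e * f * e = e := by
  obtain ⟨w⟩ := h
  refine w.iso.injective ?_
  ext <;> simp [w.left_zero, w.right_zero, w.iso_snd_snd_eq_one he, w.iso_snd_snd_eq_one hf]

end

theorem isUnit_of_mul_mul_eq_self {M : Type*} [Monoid M]
    (h1 : ∀ f : M, IsIdempotentElem f → f = 1) {x a : M} (hx : x * a * x = x) : IsUnit x := by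
  have hax : a * x = 1 := h1 _ <| by
    rw [IsIdempotentElem, mul_assoc, ← mul_assoc x, hx]
  have hxa : x * a = 1 := h1 _ <| by
    rw [IsIdempotentElem, ← mul_assoc, hx]
  exact isUnit_iff_exists.mpr ⟨a, hxa, hax⟩

section

variable {S : Type u} [Semigroup S]

theorem isIdempotentElem_mul_of_eq_mul_mul {x u : S} (h : x = x * u * x) :
    IsIdempotentElem (x * u) := by
  rw [IsIdempotentElem, ← mul_assoc, ← h]

theorem isIdempotentElem_mul_of_eq_mul_mul' {x u : S} (h : x = x * u * x) :
    IsIdempotentElem (u * x) := by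
  rw [IsIdempotentElem, mul_assoc, ← mul_assoc x, ← h]

instance IsIdempotentElem.instMonoidCorner {e : S} (idem : IsIdempotentElem e) :
    Monoid idem.Corner where
  __ : Semigroup idem.Corner := inferInstanceAs (Semigroup (Subsemigroup.corner e))
  one := ⟨e, e, by simp_rw [idem.eq]⟩
  one_mul r := Subtype.ext ((Subsemigroup.mem_corner_iff idem).mp r.2).1
  mul_one r := Subtype.ext ((Subsemigroup.mem_corner_iff idem).mp r.2).2

def IdempotentLClass (e : S) : Type u := {a : S // IsIdempotentElem a ∧ a * e = a}

def IdempotentRClass (e : S) : Type u := {b : S // IsIdempotentElem b ∧ e * b = b}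

instance (e : S) : Semigroup (IdempotentLClass e) where
  mul a _ := a
  mul_assoc _ _ _ := rfl

instance (e : S) : Semigroup (IdempotentRClass e) where
  mul _ b := b
  mul_assoc _ _ _ := rfl

variable (hE : ∀ e f : S, IsIdempotentElem e → IsIdempotentElem f →
  IsIdempotentElem (e * f) ∧ e * f * e = e)
include hE

theorem eq_of_mul_eq_of_mul_eq {e k : S} (he : IsIdempotentElem e) (hk : IsIdempotentElem k)
    (hek : e * k = k) (hke : k * e = k) : k = e :=
  calc k = e * k * e := by rw [hek, hke]
    _ = e := (hE e k he hk).2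

theorem swap_mul_eq_left_of_mul_eq_left {a b : S} (ha : IsIdempotentElem a)
    (hb : IsIdempotentElem b) (h : a * b = a) : b * a = b :=
  calc b * a = b * a * b := by rw [mul_assoc, h]
    _ = b := (hE b a hb ha).2

theorem swap_mul_eq_right_of_mul_eq_right {a b : S} (ha : IsIdempotentElem a)
    (hb : IsIdempotentElem b) (h : a * b = b) : b * a = a :=
  calc b * a = a * b * a := by rw [h]
    _ = a := (hE a b ha hb).2

theorem IdempotentRClass.val_mul_val {e : S} (he : IsIdempotentElem e) (b : IdempotentRClass e)
    (a : IdempotentLClass e) : b.1 * a.1 = e :=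
  eq_of_mul_eq_of_mul_eq hE he (hE b.1 a.1 b.2.1 a.2.1).1
    (by rw [← mul_assoc, b.2.2]) (by rw [mul_assoc, a.2.2])

theorem IsIdempotentElem.Corner.eq_one {e : S} {idem : IsIdempotentElem e} {r : idem.Corner}
    (hr : IsIdempotentElem r) : r = 1 :=
  have hr' := (Subsemigroup.mem_corner_iff idem).mp r.2
  Subtype.ext <| eq_of_mul_eq_of_mul_eq hE idem (congrArg Subtype.val hr) hr'.1 hr'.2

theorem IsIdempotentElem.Corner.isUnit (hreg : ∀ x : S, ∃ u : S, x = x * u * x) {e : S}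
    {idem : IsIdempotentElem e} (r : idem.Corner) : IsUnit r := by
  obtain ⟨u, hu⟩ := hreg r.1
  obtain ⟨hl, hr⟩ := (Subsemigroup.mem_corner_iff idem).mp r.2
  refine isUnit_of_mul_mul_eq_self (fun _ => Corner.eq_one hE)
    (a := ⟨e * u * e, u, rfl⟩) (Subtype.ext ?_)
  change r.1 * (e * u * e) * r.1 = r.1
  calc r.1 * (e * u * e) * r.1 = r.1 * e * u * (e * r.1) := by simp only [mul_assoc]
    _ = r.1 := by rw [hl, hr, ← hu]

variable {e : S} (idem : IsIdempotentElem e)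

def rectangularProductHom :
    IdempotentLClass e × IdempotentRClass e × idem.Cornerˣ →ₙ* S where
  toFun p := p.1.1 * p.2.2.1.1 * p.2.1.1
  map_mul' := by
    rintro ⟨a, b, g⟩ ⟨a', b', g'⟩
    change a.1 * (g.1.1 * g'.1.1) * b'.1 = a.1 * g.1.1 * b.1 * (a'.1 * g'.1.1 * b'.1)
    have hba : b.1 * a'.1 = e := IdempotentRClass.val_mul_val hE idem b a'
    have hg : g.1.1 * e = g.1.1 := ((Subsemigroup.mem_corner_iff idem).mp g.1.2).2
    calc a.1 * (g.1.1 * g'.1.1) * b'.1 = a.1 * (g.1.1 * (b.1 * a'.1)) * g'.1.1 * b'.1 := by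
          rw [hba, hg]; simp only [mul_assoc]
      _ = a.1 * g.1.1 * b.1 * (a'.1 * g'.1.1 * b'.1) := by simp only [mul_assoc]

theorem mul_rectangularProductHom_mul
    (p : IdempotentLClass e × IdempotentRClass e × idem.Cornerˣ) :
    e * rectangularProductHom hE idem p * e = p.2.2.1.1 := by
  obtain ⟨a, b, g⟩ := p
  have hea : e * a.1 = e := swap_mul_eq_left_of_mul_eq_left hE a.2.1 idem a.2.2
  have hbe : b.1 * e = e := swap_mul_eq_right_of_mul_eq_right hE idem b.2.1 b.2.2
  have hg := (Subsemigroup.mem_corner_iff idem).mp g.1.2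
  calc e * (a.1 * g.1.1 * b.1) * e = e * a.1 * g.1.1 * (b.1 * e) := by simp only [mul_assoc]
    _ = g.1.1 := by rw [hea, hbe, hg.1, hg.2]

theorem rectangularProductHom_mul_inv
    (p : IdempotentLClass e × IdempotentRClass e × idem.Cornerˣ) :
    rectangularProductHom hE idem p * (p.2.2⁻¹).1.1 = p.1.1 := by
  obtain ⟨a, b, g⟩ := p
  have hbe : b.1 * e = e := swap_mul_eq_right_of_mul_eq_right hE idem b.2.1 b.2.2
  have hh := (Subsemigroup.mem_corner_iff idem).mp (g⁻¹).1.2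
  have hgh : g.1.1 * (g⁻¹).1.1 = e :=
    congrArg (fun u : idem.Cornerˣ => u.1.1) (mul_inv_cancel g)
  calc a.1 * g.1.1 * b.1 * (g⁻¹).1.1 = a.1 * g.1.1 * (b.1 * e * (g⁻¹).1.1) := by
        rw [mul_assoc b.1, hh.1, mul_assoc]
    _ = a.1 := by rw [hbe, hh.1, mul_assoc a.1, hgh, a.2.2]

theorem inv_mul_rectangularProductHom
    (p : IdempotentLClass e × IdempotentRClass e × idem.Cornerˣ) :
    (p.2.2⁻¹).1.1 * rectangularProductHom hE idem p = p.2.1.1 := by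
  obtain ⟨a, b, g⟩ := p
  have hea : e * a.1 = e := swap_mul_eq_left_of_mul_eq_left hE a.2.1 idem a.2.2
  have hh := (Subsemigroup.mem_corner_iff idem).mp (g⁻¹).1.2
  have hhg : (g⁻¹).1.1 * g.1.1 = e :=
    congrArg (fun u : idem.Cornerˣ => u.1.1) (inv_mul_cancel g)
  calc (g⁻¹).1.1 * (a.1 * g.1.1 * b.1) = (g⁻¹).1.1 * (e * a.1) * g.1.1 * b.1 := by
        rw [← mul_assoc _ e, hh.2]; simp only [mul_assoc]
    _ = b.1 := by rw [hea, hh.2, hhg, b.2.2]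

theorem rectangularProductHom_injective : Function.Injective (rectangularProductHom hE idem) := by
  intro p q hpq
  have hg : p.2.2 = q.2.2 := Units.ext <| Subtype.ext <| by
    rw [← mul_rectangularProductHom_mul hE idem p, hpq, mul_rectangularProductHom_mul]
  have ha : p.1 = q.1 := Subtype.ext <| by
    rw [← rectangularProductHom_mul_inv hE idem p, hpq, hg, rectangularProductHom_mul_inv]
  have hb : p.2.1 = q.2.1 := Subtype.ext <| by
    rw [← inv_mul_rectangularProductHom hE idem p, hpq, hg, inv_mul_rectangularProductHom]
  exact Prod.ext ha (Prod.ext hb hg)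

theorem rectangularProductHom_surjective (hreg : ∀ x : S, ∃ u : S, x = x * u * x) :
    Function.Surjective (rectangularProductHom hE idem) := by
  intro s
  obtain ⟨u, hu⟩ := hreg s
  have hsu := isIdempotentElem_mul_of_eq_mul_mul hu
  have hus := isIdempotentElem_mul_of_eq_mul_mul' hu
  have hsues : s * u * e * s = s :=
    calc s * u * e * s = s * u * e * (s * u) * s := by
          nth_rewrite 2 [hu]; simp only [mul_assoc]
      _ = s := by rw [(hE _ _ hsu idem).2, ← hu]
  have hseus : s * e * (u * s) = s :=
    calc s * e * (u * s) = s * (u * s * e * (u * s)) := by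
          nth_rewrite 1 [hu]; simp only [mul_assoc]
      _ = s := by rw [(hE _ _ hus idem).2, ← mul_assoc, ← hu]
  let a : IdempotentLClass e := ⟨s * u * e, (hE _ _ hsu idem).1, idem.mul_mul_self _⟩
  let b : IdempotentRClass e := ⟨e * (u * s), (hE _ _ idem hus).1, idem.mul_self_mul _⟩
  let g : idem.Corner := ⟨e * s * e, s, rfl⟩
  refine ⟨(a, b, (IsIdempotentElem.Corner.isUnit hE hreg g).unit), ?_⟩
  calc s * u * e * (e * s * e) * (e * (u * s)) = s * u * e * s * e * (u * s) := by
        simp only [mul_assoc, idem.mul_self_mul]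
    _ = s := by rw [hsues, hseus]

theorem isRectangularGroup_of_regular_of_idempotents [Nonempty S]
    (hreg : ∀ x : S, ∃ u : S, x = x * u * x) : IsRectangularGroup S := by
  obtain ⟨x⟩ := ‹Nonempty S›
  obtain ⟨u, hu⟩ := hreg x
  have idem := isIdempotentElem_mul_of_eq_mul_mul hu
  exact ⟨⟨IdempotentLClass (x * u), IdempotentRClass (x * u), idem.Cornerˣ,
    fun _ _ => rfl, fun _ _ => rfl,
    (MulEquiv.ofBijective (rectangularProductHom hE idem) ⟨rectangularProductHom_injective hE idem,
      rectangularProductHom_surjective hE idem hreg⟩).symm⟩⟩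

end

/-- A semigroup `S` is a rectangular group if and only if every element of `S` is regular
and the set of idempotents of `S` is a rectangular band, i.e. it is closed under
multiplication and `e·f·e = e` for all idempotents `e, f`. -/
theorem isRectangularGroup_iff_regular_and_idempotents_rectangular_band
    {S : Type u} [Semigroup S] [Nonempty S] :
    IsRectangularGroup S ↔
      ((∀ x : S, ∃ u : S, x = x * u * x) ∧
        (∀ e f : S, e * e = e → f * f = f →
          (e * f) * (e * f) = e * f ∧ e * f * e = e)) :=
  ⟨fun h => ⟨h.exists_eq_mul_mul, fun _ _ he hf =>
      ⟨h.isIdempotentElem_mul he hf, h.mul_mul_eq_self he hf⟩⟩,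
    fun ⟨hreg, hE⟩ => isRectangularGroup_of_regular_of_idempotents hE hreg⟩
end

section
/- Let S be a stable semigroup, let d ∈ S be regular, and let D be the D-class of d. Suppose that every element of D is regular and that the set E(D) of idempotents lying in D is closed under the multiplication of S. Then e·f·e = e for all e, f ∈ E(D) (so E(D) is a rectangular band), D is closed under the multiplication of S, and D with the restricted multiplication is a rectangular group. -/
universe u

/-- Green's `≤_R` preorder on a semigroup. -/
def leR {S : Type u} [Mul S] (x y : S) : Prop := x = y ∨ ∃ a, x = y * a

/-- Green's `≤_L` preorder on a semigroup. -/
def leL {S : Type u} [Mul S] (x y : S) : Prop := x = y ∨ ∃ a, x = a * y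

/-- Green's `≤_J` preorder on a semigroup. -/
def leJ {S : Type u} [Mul S] (x y : S) : Prop :=
  x = y ∨ (∃ a, x = a * y) ∨ (∃ b, x = y * b) ∨ ∃ a b, x = a * y * b

/-- Green's `R` relation. -/
def grR {S : Type u} [Mul S] (x y : S) : Prop := leR x y ∧ leR y x

/-- Green's `L` relation. -/
def grL {S : Type u} [Mul S] (x y : S) : Prop := leL x y ∧ leL y x

/-- Green's `J` relation. -/
def grJ {S : Type u} [Mul S] (x y : S) : Prop := leJ x y ∧ leJ y x

/-- Green's `D` relation: `x D y` iff there is `z` with `x R z` and `z L y`. -/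
def grD {S : Type u} [Mul S] (x y : S) : Prop := ∃ z, grR x z ∧ grL z y

/-- A semigroup is stable if `x J x·u → x R x·u` and `x J u·x → x L u·x` for all `x, u`. -/
def IsStable (S : Type u) [Mul S] : Prop :=
  ∀ x u : S, (grJ x (x * u) → grR x (x * u)) ∧ (grJ x (u * x) → grL x (u * x))

namespace RectAux
variable {S : Type u} [Semigroup S]

def om (y : S) (b : Option S) : S := b.elim y (y * ·)
def mo (a : Option S) (y : S) : S := a.elim y (· * y)
def oc (a b : Option S) : Option S :=
  match a, b with
  | none, b => b
  | a, none => a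
  | some p, some q => some (p * q)

lemma om_om (y : S) (a b : Option S) : om (om y a) b = om y (oc a b) := by
  cases a <;> cases b <;> simp [om, oc, mul_assoc]

lemma mo_mo (a b : Option S) (y : S) : mo a (mo b y) = mo (oc a b) y := by
  cases a <;> cases b <;> simp [mo, oc, mul_assoc]

lemma mo_om (a : Option S) (y : S) (b : Option S) : mo a (om y b) = om (mo a y) b := by
  cases a <;> cases b <;> simp [mo, om, mul_assoc]

lemma leR_iff {x y : S} : leR x y ↔ ∃ b : Option S, x = om y b := by
  constructor
  · rintro (rfl | ⟨a, rfl⟩)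
    exacts [⟨none, rfl⟩, ⟨some a, rfl⟩]
  · rintro ⟨(_ | b), rfl⟩
    exacts [Or.inl rfl, Or.inr ⟨b, rfl⟩]

lemma leL_iff {x y : S} : leL x y ↔ ∃ a : Option S, x = mo a y := by
  constructor
  · rintro (rfl | ⟨a, rfl⟩)
    exacts [⟨none, rfl⟩, ⟨some a, rfl⟩]
  · rintro ⟨(_ | a), rfl⟩
    exacts [Or.inl rfl, Or.inr ⟨a, rfl⟩]

lemma leJ_iff {x y : S} : leJ x y ↔ ∃ a b : Option S, x = om (mo a y) b := by
  constructor
  · rintro (rfl | ⟨a, rfl⟩ | ⟨b, rfl⟩ | ⟨a, b, rfl⟩)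
    exacts [⟨none, none, rfl⟩, ⟨some a, none, rfl⟩, ⟨none, some b, rfl⟩,
      ⟨some a, some b, rfl⟩]
  · rintro ⟨(_ | a), (_ | b), rfl⟩
    exacts [Or.inl rfl, Or.inr (Or.inr (Or.inl ⟨b, rfl⟩)),
      Or.inr (Or.inl ⟨a, rfl⟩), Or.inr (Or.inr (Or.inr ⟨a, b, rfl⟩))]

lemma leR_refl (x : S) : leR x x := Or.inl rfl
lemma leL_refl (x : S) : leL x x := Or.inl rfl
lemma leJ_refl (x : S) : leJ x x := Or.inl rfl

lemma leR_trans {x y z : S} (h1 : leR x y) (h2 : leR y z) : leR x z := by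
  rw [leR_iff] at h1 h2 ⊢
  obtain ⟨a, rfl⟩ := h1
  obtain ⟨b, rfl⟩ := h2
  exact ⟨oc b a, om_om z b a⟩

lemma leL_trans {x y z : S} (h1 : leL x y) (h2 : leL y z) : leL x z := by
  rw [leL_iff] at h1 h2 ⊢
  obtain ⟨a, rfl⟩ := h1
  obtain ⟨b, rfl⟩ := h2
  exact ⟨oc a b, mo_mo a b z⟩

lemma leJ_trans {x y z : S} (h1 : leJ x y) (h2 : leJ y z) : leJ x z := by
  rw [leJ_iff] at h1 h2 ⊢
  obtain ⟨a, b, rfl⟩ := h1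
  obtain ⟨c, e, rfl⟩ := h2
  exact ⟨oc a c, oc e b, by rw [mo_om, om_om, mo_mo]⟩

lemma leJ_of_leR {x y : S} (h : leR x y) : leJ x y := by
  rw [leR_iff] at h; rw [leJ_iff]
  obtain ⟨b, rfl⟩ := h
  exact ⟨none, b, rfl⟩

lemma leJ_of_leL {x y : S} (h : leL x y) : leJ x y := by
  rw [leL_iff] at h; rw [leJ_iff]
  obtain ⟨a, rfl⟩ := h
  exact ⟨a, none, rfl⟩

lemma grR_refl (x : S) : grR x x := ⟨leR_refl x, leR_refl x⟩
lemma grL_refl (x : S) : grL x x := ⟨leL_refl x, leL_refl x⟩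
lemma grR_symm {x y : S} (h : grR x y) : grR y x := ⟨h.2, h.1⟩
lemma grL_symm {x y : S} (h : grL x y) : grL y x := ⟨h.2, h.1⟩
lemma grJ_symm {x y : S} (h : grJ x y) : grJ y x := ⟨h.2, h.1⟩
lemma grR_trans {x y z : S} (h1 : grR x y) (h2 : grR y z) : grR x z :=
  ⟨leR_trans h1.1 h2.1, leR_trans h2.2 h1.2⟩
lemma grL_trans {x y z : S} (h1 : grL x y) (h2 : grL y z) : grL x z :=
  ⟨leL_trans h1.1 h2.1, leL_trans h2.2 h1.2⟩
lemma grJ_trans {x y z : S} (h1 : grJ x y) (h2 : grJ y z) : grJ x z :=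
  ⟨leJ_trans h1.1 h2.1, leJ_trans h2.2 h1.2⟩

lemma grJ_of_grR {x y : S} (h : grR x y) : grJ x y :=
  ⟨leJ_of_leR h.1, leJ_of_leR h.2⟩
lemma grJ_of_grL {x y : S} (h : grL x y) : grJ x y :=
  ⟨leJ_of_leL h.1, leJ_of_leL h.2⟩

/-- `L ∘ R ⊆ R ∘ L`. -/
lemma comm_LR {x y c : S} (h1 : grL x y) (h2 : grR y c) : ∃ w, grR x w ∧ grL w c := by
  obtain ⟨p, hp⟩ := leL_iff.1 h1.1
  obtain ⟨q, hq⟩ := leL_iff.1 h1.2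
  obtain ⟨r, hr⟩ := leR_iff.1 h2.2
  obtain ⟨s, hs⟩ := leR_iff.1 h2.1
  refine ⟨om x r, ⟨?_, leR_iff.2 ⟨r, rfl⟩⟩, ?_, ?_⟩
  · refine leR_iff.2 ⟨s, ?_⟩
    rw [om_om]
    calc x = mo p y := hp
    _ = mo p (om c s) := by rw [← hs]
    _ = mo p (om (om y r) s) := by rw [← hr]
    _ = mo p (om y (oc r s)) := by rw [om_om]
    _ = om (mo p y) (oc r s) := by rw [mo_om]
    _ = om x (oc r s) := by rw [← hp]
  · refine leL_iff.2 ⟨p, ?_⟩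
    rw [hp, hr]
    exact (mo_om p y r).symm
  · refine leL_iff.2 ⟨q, ?_⟩
    rw [hr, hq]
    exact (mo_om q x r).symm

lemma grD_refl (x : S) : grD x x := ⟨x, grR_refl x, grL_refl x⟩
lemma grD_symm {x y : S} (h : grD x y) : grD y x := by
  obtain ⟨z, h1, h2⟩ := h
  obtain ⟨w, hw1, hw2⟩ := comm_LR (grL_symm h2) (grR_symm h1)
  exact ⟨w, hw1, hw2⟩
lemma grD_trans {x y z : S} (h1 : grD x y) (h2 : grD y z) : grD x z := by
  obtain ⟨z1, ha, hb⟩ := h1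
  obtain ⟨z2, hc, hd⟩ := h2
  obtain ⟨w, hw1, hw2⟩ := comm_LR hb hc
  exact ⟨w, grR_trans ha hw1, grL_trans hw2 hd⟩

lemma grD_of_grR {x y : S} (h : grR x y) : grD x y := ⟨y, h, grL_refl y⟩
lemma grD_of_grL {x y : S} (h : grL x y) : grD x y := ⟨x, grR_refl x, h⟩

lemma grJ_of_grD {x y : S} (h : grD x y) : grJ x y := by
  obtain ⟨z, h1, h2⟩ := h
  exact grJ_trans (grJ_of_grR h1) (grJ_of_grL h2)

end RectAux

open RectAux

set_option maxHeartbeats 2000000 in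
/-- Let `S` be a stable semigroup, `d ∈ S` regular, and `D` the `D`-class of `d`.  If every
element of `D` is regular and the set `E(D)` of idempotents of `D` is closed under
multiplication, then `e·f·e = e` for all `e, f ∈ E(D)` (so `E(D)` is a rectangular band),
`D` is closed under multiplication, and `D` is a rectangular group. -/
theorem regular_stable_Dclass_is_rectangular_group {S : Type u} [Semigroup S]
    (hstable : IsStable S)
    (d : S) (hd : ∃ u, d = d * u * d)
    (D : Set S) (hD : D = {x | grD x d})
    (hreg : ∀ x ∈ D, ∃ u, x = x * u * x)
    (hEclosed : ∀ e ∈ D, ∀ f ∈ D, e * e = e → f * f = f →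
      e * f ∈ D ∧ (e * f) * (e * f) = e * f) :
    (∀ e ∈ D, ∀ f ∈ D, e * e = e → f * f = f → e * f * e = e) ∧
    (∀ x ∈ D, ∀ y ∈ D, x * y ∈ D) ∧
    ∃ T : Subsemigroup S, (T : Set S) = D ∧ IsRectangularGroup ↥T := by
  classical
  have mem : ∀ {x : S}, x ∈ D ↔ grD x d := by
    intro x; rw [hD]; exact Iff.rfl
  have memR : ∀ {x y : S}, x ∈ D → grR y x → y ∈ D := by
    intro x y hx h
    exact mem.2 (grD_trans (grD_of_grR h) (mem.1 hx))
  have memL : ∀ {x y : S}, x ∈ D → grL y x → y ∈ D := by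
    intro x y hx h
    exact mem.2 (grD_trans (grD_of_grL h) (mem.1 hx))
  have hJD : ∀ {x y : S}, x ∈ D → y ∈ D → grJ x y := by
    intro x y hx hy
    exact grJ_of_grD (grD_trans (mem.1 hx) (grD_symm (mem.1 hy)))
  -- Part 1: E(D) is a rectangular band
  have band : ∀ p ∈ D, ∀ q ∈ D, p * p = p → q * q = q → p * q * p = p := by
    intro p hp q hq hpp hqq
    obtain ⟨hpqD, hpqi⟩ := hEclosed p hp q hq hpp hqq
    have hR : grR p (p * q) := (hstable p q).1 (hJD hp hpqD)
    rcases hR.1 with h | ⟨a, ha⟩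
    · rw [← h]; exact hpp
    · calc p * q * p = p * q * (p * q * a) := by rw [← ha]
      _ = (p * q) * (p * q) * a := by rw [← mul_assoc]
      _ = p * q * a := by rw [hpqi]
      _ = p := ha.symm
  -- decomposition lemmas
  have idemR : ∀ x ∈ D, ∀ w : S, x = x * w * x →
      (x * w) ∈ D ∧ (x * w) * (x * w) = x * w ∧ (x * w) * x = x := by
    intro x hx w hw
    have h1 : (x * w) * x = x := hw.symm
    have h2 : (x * w) * (x * w) = x * w := by
      rw [← mul_assoc, h1]
    have hJ : grJ x (x * w) := by
      constructor
      · exact Or.inr (Or.inr (Or.inl ⟨x, hw⟩))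
      · exact Or.inr (Or.inr (Or.inl ⟨w, rfl⟩))
    have hR : grR x (x * w) := (hstable x w).1 hJ
    exact ⟨memR hx (grR_symm hR), h2, h1⟩
  have idemL : ∀ x ∈ D, ∀ w : S, x = x * w * x →
      (w * x) ∈ D ∧ (w * x) * (w * x) = w * x ∧ x * (w * x) = x := by
    intro x hx w hw
    have h1 : x * (w * x) = x := by rw [← mul_assoc]; exact hw.symm
    have h2 : (w * x) * (w * x) = w * x := by
      rw [mul_assoc, h1]
    have hJ : grJ x (w * x) := by
      constructor
      · exact Or.inr (Or.inl ⟨x, h1.symm⟩)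
      · exact Or.inr (Or.inl ⟨w, rfl⟩)
    have hL : grL x (w * x) := (hstable x w).2 hJ
    exact ⟨memL hx (grL_symm hL), h2, h1⟩
  -- Part 2: D is closed under multiplication
  have closed : ∀ x ∈ D, ∀ y ∈ D, x * y ∈ D := by
    intro x hx y hy
    obtain ⟨w, hw⟩ := hreg x hx
    obtain ⟨v, hv⟩ := hreg y hy
    obtain ⟨hgD, hgg, hxg⟩ := idemL x hx w hw
    obtain ⟨hfD, hff, hfy⟩ := idemR y hy v hv
    have hb : (w * x) * ((y * v) * (w * x)) = w * x := by
      have := band (w * x) hgD (y * v) hfD hgg hff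
      rw [mul_assoc] at this
      exact this
    have key : (x * y) * (v * (w * x)) = x := by
      calc (x * y) * (v * (w * x)) = x * (y * (v * (w * x))) := by rw [mul_assoc]
      _ = x * ((y * v) * (w * x)) := by rw [← mul_assoc y v (w * x)]
      _ = (x * (w * x)) * ((y * v) * (w * x)) := by rw [hxg]
      _ = x * ((w * x) * ((y * v) * (w * x))) := by rw [mul_assoc]
      _ = x * (w * x) := by rw [hb]
      _ = x := hxg
    have hR : grR (x * y) x :=
      ⟨Or.inr ⟨y, rfl⟩, Or.inr ⟨v * (w * x), key.symm⟩⟩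
    exact memR hx hR
  refine ⟨band, closed, ?_⟩
  obtain ⟨u0, hdu⟩ := hd
  have hdD : d ∈ D := mem.2 (grD_refl d)
  obtain ⟨heD, hee, -⟩ := idemR d hdD u0 hdu
  obtain ⟨e, hedef⟩ : ∃ e' : S, e' = d * u0 := ⟨_, rfl⟩
  rw [← hedef] at heD hee
  -- band facts around e
  have ebandl : ∀ p ∈ D, p * p = p → (e * p) * e = e := by
    intro p hp hpp
    exact band e heD p hp hee hpp
  have ebandr : ∀ p ∈ D, p * p = p → (p * e) * p = p := by
    intro p hp hpp
    exact band p hp e heD hpp hee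
  -- group inverses inside the H-class of e
  have Ginv : ∀ x, x ∈ D → e * x = x → x * e = x →
      ∃ y, y ∈ D ∧ e * y = y ∧ y * e = y ∧ y * x = e ∧ x * y = e := by
    intro x hx hex hxe
    obtain ⟨w, hw⟩ := hreg x hx
    obtain ⟨hfD, hff, hfx⟩ := idemR x hx w hw
    obtain ⟨hgD, hgg, hxg⟩ := idemL x hx w hw
    obtain ⟨hFD, hFF⟩ := hEclosed (x * w) hfD e heD hff hee
    obtain ⟨hKD, hKK⟩ := hEclosed e heD (w * x) hgD hee hgg
    -- (x*w)*e = e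
    have heF : e * ((x * w) * e) = (x * w) * e := by
      calc e * ((x * w) * e) = (e * (x * w)) * e := by rw [← mul_assoc]
      _ = ((e * x) * w) * e := by rw [← mul_assoc]
      _ = (x * w) * e := by rw [hex]
    have hFe : ((x * w) * e) * e = (x * w) * e := by
      rw [mul_assoc, hee]
    have hFeq : (x * w) * e = e := by
      calc (x * w) * e = ((x * w) * e) * e := hFe.symm
      _ = (e * ((x * w) * e)) * e := by rw [heF]
      _ = e := ebandl ((x * w) * e) hFD hFF
    -- e*(w*x) = e
    have heK : e * (e * (w * x)) = e * (w * x) := by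
      rw [← mul_assoc, hee]
    have hKe : (e * (w * x)) * e = e * (w * x) := by
      calc (e * (w * x)) * e = e * ((w * x) * e) := by rw [mul_assoc]
      _ = e * (w * (x * e)) := by rw [mul_assoc w x e]
      _ = e * (w * x) := by rw [hxe]
    have hKeq : e * (w * x) = e := by
      calc e * (w * x) = (e * (w * x)) * e := hKe.symm
      _ = (e * (e * (w * x))) * e := by rw [heK]
      _ = e := ebandl (e * (w * x)) hKD hKK
    refine ⟨(e * w) * e, ?_, ?_, ?_, ?_, ?_⟩
    · -- membership
      have hyx : ((e * w) * e) * x = e := by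
        calc ((e * w) * e) * x = (e * w) * (e * x) := by rw [mul_assoc]
        _ = (e * w) * x := by rw [hex]
        _ = e * (w * x) := by rw [mul_assoc]
        _ = e := hKeq
      refine memR heD ⟨Or.inr ⟨w * e, ?_⟩, Or.inr ⟨x, hyx.symm⟩⟩
      rw [mul_assoc]
    · calc e * ((e * w) * e) = (e * (e * w)) * e := by rw [← mul_assoc]
      _ = ((e * e) * w) * e := by rw [← mul_assoc]
      _ = (e * w) * e := by rw [hee]
    · rw [mul_assoc, hee]
    · calc ((e * w) * e) * x = (e * w) * (e * x) := by rw [mul_assoc]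
      _ = (e * w) * x := by rw [hex]
      _ = e * (w * x) := by rw [mul_assoc]
      _ = e := hKeq
    · calc x * ((e * w) * e) = (x * (e * w)) * e := by rw [← mul_assoc]
      _ = ((x * e) * w) * e := by rw [← mul_assoc]
      _ = (x * w) * e := by rw [hxe]
      _ = e := hFeq
  -- absorption facts
  have heu : ∀ u : S, u ∈ D → u * u = u → u * e = u → e * u = e := by
    intro u hu huu hue
    calc e * u = e * (u * e) := by rw [hue]
    _ = (e * u) * e := by rw [← mul_assoc]
    _ = e := ebandl u hu huu
  have hve : ∀ v : S, v ∈ D → v * v = v → e * v = v → v * e = e := by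
    intro v hv hvv hev
    calc v * e = (e * v) * e := by rw [hev]
    _ = e := ebandl v hv hvv
  have hUz : ∀ u u' : S, u ∈ D → u * u = u → u * e = u →
      u' ∈ D → u' * u' = u' → u' * e = u' → u * u' = u := by
    intro u u' hu huu hue hu' huu' hue'
    calc u * u' = u * (u' * e) := by rw [hue']
    _ = (u * e) * (u' * e) := by rw [hue]
    _ = u * (e * (u' * e)) := by rw [mul_assoc]
    _ = u * ((e * u') * e) := by rw [mul_assoc e u' e]
    _ = u * e := by rw [ebandl u' hu' huu']
    _ = u := hue
  have hVz : ∀ v v' : S, v ∈ D → v * v = v → e * v = v →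
      v' ∈ D → v' * v' = v' → e * v' = v' → v * v' = v' := by
    intro v v' hv hvv hev hv' hvv' hev'
    calc v * v' = v * (e * v') := by rw [hev']
    _ = (e * v) * (e * v') := by rw [hev]
    _ = ((e * v) * e) * v' := by rw [mul_assoc (e * v) e v']
    _ = e * v' := by rw [ebandl v hv hvv]
    _ = v' := hev'
  have hmid : ∀ g v u' g' : S, g * e = g → e * g' = g' →
      v ∈ D → v * v = v → e * v = v →
      u' ∈ D → u' * u' = u' → u' * e = u' →
      (g * (v * u')) * g' = g * g' := by
    intro g v u' g' hge heg' hv hvv hev hu' huu' hue'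
    obtain ⟨hm, hmm⟩ := hEclosed v hv u' hu' hvv huu'
    have hsand : (e * (v * u')) * e = e := ebandl (v * u') hm hmm
    calc (g * (v * u')) * g' = ((g * e) * (v * u')) * g' := by rw [hge]
    _ = (g * (e * (v * u'))) * g' := by rw [mul_assoc g e (v * u')]
    _ = (g * (e * (v * u'))) * (e * g') := by rw [heg']
    _ = ((g * (e * (v * u'))) * e) * g' := by rw [mul_assoc (g * (e * (v * u'))) e g']
    _ = (g * ((e * (v * u')) * e)) * g' := by rw [mul_assoc g (e * (v * u')) e]
    _ = (g * e) * g' := by rw [hsand]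
    _ = g * g' := by rw [hge]
  have hhom : ∀ u g v u' g' v' : S, g * e = g → e * g' = g' →
      v ∈ D → v * v = v → e * v = v →
      u' ∈ D → u' * u' = u' → u' * e = u' →
      ((u * g) * v) * ((u' * g') * v') = (u * (g * g')) * v' := by
    intro u g v u' g' v' hge heg' hv hvv hev hu' huu' hue'
    calc ((u * g) * v) * ((u' * g') * v')
        = (u * g) * (v * ((u' * g') * v')) := by rw [mul_assoc]
    _ = (u * g) * ((v * (u' * g')) * v') := by rw [mul_assoc v (u' * g') v']
    _ = (u * g) * (((v * u') * g') * v') := by rw [mul_assoc v u' g']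
    _ = ((u * g) * ((v * u') * g')) * v' := by
          rw [mul_assoc (u * g) ((v * u') * g') v']
    _ = (u * (g * ((v * u') * g'))) * v' := by rw [mul_assoc u g ((v * u') * g')]
    _ = (u * ((g * (v * u')) * g')) * v' := by rw [mul_assoc g (v * u') g']
    _ = (u * (g * g')) * v' := by rw [hmid g v u' g' hge heg' hv hvv hev hu' huu' hue']
  have hext : ∀ u g v : S, u ∈ D → u * u = u → u * e = u →
      v ∈ D → v * v = v → e * v = v → e * g = g → g * e = g →
      (((u * g) * v) * e = u * g) ∧ (e * ((u * g) * v) = g * v) ∧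
        ((e * ((u * g) * v)) * e = g) := by
    intro u g v hu huu hue hv hvv hev heg hge
    have hveE : v * e = e := hve v hv hvv hev
    have heuE : e * u = e := heu u hu huu hue
    have h1 : ((u * g) * v) * e = u * g := by
      calc ((u * g) * v) * e = (u * g) * (v * e) := by rw [mul_assoc]
      _ = (u * g) * e := by rw [hveE]
      _ = u * (g * e) := by rw [mul_assoc]
      _ = u * g := by rw [hge]
    have h2 : e * ((u * g) * v) = g * v := by
      calc e * ((u * g) * v) = e * (u * (g * v)) := by rw [mul_assoc u g v]
      _ = (e * u) * (g * v) := by rw [← mul_assoc]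
      _ = e * (g * v) := by rw [heuE]
      _ = (e * g) * v := by rw [← mul_assoc]
      _ = g * v := by rw [heg]
    refine ⟨h1, h2, ?_⟩
    calc (e * ((u * g) * v)) * e = (g * v) * e := by rw [h2]
    _ = g * (v * e) := by rw [mul_assoc]
    _ = g * e := by rw [hveE]
    _ = g := hge
  -- the subsemigroup T
  let T : Subsemigroup S := ⟨D, fun {a b} ha hb => closed a ha b hb⟩
  refine ⟨T, rfl, ?_⟩
  refine ⟨?_⟩
  letI instMulU : Mul {h : S // h ∈ D ∧ h * h = h ∧ h * e = h} :=
    ⟨fun a b => ⟨a.1 * b.1, by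
      obtain ⟨h1, h2⟩ := hEclosed a.1 a.2.1 b.1 b.2.1 a.2.2.1 b.2.2.1
      exact ⟨h1, h2, by rw [mul_assoc, b.2.2.2]⟩⟩⟩
  letI instSemU : Semigroup {h : S // h ∈ D ∧ h * h = h ∧ h * e = h} :=
    { mul_assoc := fun a b c => Subtype.ext (mul_assoc a.1 b.1 c.1) }
  letI instMulV : Mul {h : S // h ∈ D ∧ h * h = h ∧ e * h = h} :=
    ⟨fun a b => ⟨a.1 * b.1, by
      obtain ⟨h1, h2⟩ := hEclosed a.1 a.2.1 b.1 b.2.1 a.2.2.1 b.2.2.1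
      exact ⟨h1, h2, by rw [← mul_assoc, a.2.2.2]⟩⟩⟩
  letI instSemV : Semigroup {h : S // h ∈ D ∧ h * h = h ∧ e * h = h} :=
    { mul_assoc := fun a b c => Subtype.ext (mul_assoc a.1 b.1 c.1) }
  letI instGrpG : Group {g : S // g ∈ D ∧ e * g = g ∧ g * e = g} :=
    { mul := fun a b => ⟨a.1 * b.1, closed a.1 a.2.1 b.1 b.2.1,
        by rw [← mul_assoc, a.2.2.1], by rw [mul_assoc, b.2.2.2]⟩
      mul_assoc := fun a b c => Subtype.ext (mul_assoc a.1 b.1 c.1)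
      one := ⟨e, heD, hee, hee⟩
      one_mul := fun a => Subtype.ext a.2.2.1
      mul_one := fun a => Subtype.ext a.2.2.2
      inv := fun a => ⟨(Ginv a.1 a.2.1 a.2.2.1 a.2.2.2).choose,
        (Ginv a.1 a.2.1 a.2.2.1 a.2.2.2).choose_spec.1,
        (Ginv a.1 a.2.1 a.2.2.1 a.2.2.2).choose_spec.2.1,
        (Ginv a.1 a.2.1 a.2.2.1 a.2.2.2).choose_spec.2.2.1⟩
      inv_mul_cancel := fun a =>
        Subtype.ext (Ginv a.1 a.2.1 a.2.2.1 a.2.2.2).choose_spec.2.2.2.1 }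
  let ψ : ({h : S // h ∈ D ∧ h * h = h ∧ h * e = h} ×
      {h : S // h ∈ D ∧ h * h = h ∧ e * h = h} ×
      {g : S // g ∈ D ∧ e * g = g ∧ g * e = g}) →ₙ* ↥T :=
    { toFun := fun p => ⟨(p.1.1 * p.2.2.1) * p.2.1.1,
        closed _ (closed _ p.1.2.1 _ p.2.2.2.1) _ p.2.1.2.1⟩
      map_mul' := fun p q => Subtype.ext (by
        show ((p.1.1 * q.1.1) * (p.2.2.1 * q.2.2.1)) * (p.2.1.1 * q.2.1.1)
          = ((p.1.1 * p.2.2.1) * p.2.1.1) * ((q.1.1 * q.2.2.1) * q.2.1.1)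
        rw [hUz p.1.1 q.1.1 p.1.2.1 p.1.2.2.1 p.1.2.2.2 q.1.2.1 q.1.2.2.1 q.1.2.2.2,
          hVz p.2.1.1 q.2.1.1 p.2.1.2.1 p.2.1.2.2.1 p.2.1.2.2.2
            q.2.1.2.1 q.2.1.2.2.1 q.2.1.2.2.2]
        exact (hhom p.1.1 p.2.2.1 p.2.1.1 q.1.1 q.2.2.1 q.2.1.1
          p.2.2.2.2.2 q.2.2.2.2.1 p.2.1.2.1 p.2.1.2.2.1 p.2.1.2.2.2
          q.1.2.1 q.1.2.2.1 q.1.2.2.2).symm) }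
  have hinj : Function.Injective ψ := by
    rintro ⟨⟨u, hu⟩, ⟨v, hv⟩, ⟨g, hg⟩⟩ ⟨⟨u', hu'⟩, ⟨v', hv'⟩, ⟨g', hg'⟩⟩ hpq
    have hval : (u * g) * v = (u' * g') * v' := congrArg Subtype.val hpq
    obtain ⟨hA1, hA2, hA3⟩ :=
      hext u g v hu.1 hu.2.1 hu.2.2 hv.1 hv.2.1 hv.2.2 hg.2.1 hg.2.2
    obtain ⟨hB1, hB2, hB3⟩ :=
      hext u' g' v' hu'.1 hu'.2.1 hu'.2.2 hv'.1 hv'.2.1 hv'.2.2 hg'.2.1 hg'.2.2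
    have hgg : g = g' := by rw [← hA3, ← hB3, hval]
    obtain ⟨y, hyD, hey, hye, hyg, hgy⟩ := Ginv g hg.1 hg.2.1 hg.2.2
    have h1 : u * g = u' * g' := by rw [← hA1, ← hB1, hval]
    have huu : u = u' := by
      calc u = u * e := hu.2.2.symm
      _ = u * (g * y) := by rw [hgy]
      _ = (u * g) * y := by rw [← mul_assoc]
      _ = (u' * g') * y := by rw [h1]
      _ = u' * (g' * y) := by rw [mul_assoc]
      _ = u' * (g * y) := by rw [hgg]
      _ = u' * e := by rw [hgy]
      _ = u' := hu'.2.2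
    have h2 : g * v = g' * v' := by rw [← hA2, ← hB2, hval]
    have hvv2 : v = v' := by
      calc v = e * v := hv.2.2.symm
      _ = (y * g) * v := by rw [hyg]
      _ = y * (g * v) := by rw [mul_assoc]
      _ = y * (g' * v') := by rw [h2]
      _ = y * (g * v') := by rw [hgg]
      _ = (y * g) * v' := by rw [← mul_assoc]
      _ = e * v' := by rw [hyg]
      _ = v' := hv'.2.2
    simp only [Prod.mk.injEq, Subtype.mk.injEq]
    exact ⟨huu, hvv2, hgg⟩
  have hsurj : Function.Surjective ψ := by
    rintro ⟨x, hx⟩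
    obtain ⟨w, hw⟩ := hreg x hx
    obtain ⟨hfD, hff, hfx⟩ := idemR x hx w hw
    obtain ⟨hgD, hgg, hxg⟩ := idemL x hx w hw
    obtain ⟨hucD, huci⟩ := hEclosed (x * w) hfD e heD hff hee
    obtain ⟨hvcD, hvci⟩ := hEclosed e heD (w * x) hgD hee hgg
    refine ⟨⟨⟨(x * w) * e, hucD, huci, by rw [mul_assoc, hee]⟩,
      ⟨e * (w * x), hvcD, hvci, by rw [← mul_assoc, hee]⟩,
      ⟨(e * x) * e, closed _ (closed _ heD _ hx) _ heD,
        by rw [← mul_assoc, ← mul_assoc, hee], by rw [mul_assoc, hee]⟩⟩, ?_⟩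
    apply Subtype.ext
    show (((x * w) * e) * ((e * x) * e)) * (e * (w * x)) = x
    have hfex : (x * w) * (e * x) = x := by
      calc (x * w) * (e * x) = (x * w) * (e * ((x * w) * x)) := by rw [hfx]
      _ = (x * w) * ((e * (x * w)) * x) := by rw [mul_assoc e (x * w) x]
      _ = ((x * w) * (e * (x * w))) * x := by rw [mul_assoc (x * w) (e * (x * w)) x]
      _ = (((x * w) * e) * (x * w)) * x := by rw [mul_assoc (x * w) e (x * w)]
      _ = (x * w) * x := by rw [ebandr (x * w) hfD hff]
      _ = x := hfx
    have hxeg : x * (e * (w * x)) = x := by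
      calc x * (e * (w * x)) = (x * (w * x)) * (e * (w * x)) := by rw [hxg]
      _ = x * ((w * x) * (e * (w * x))) := by rw [mul_assoc]
      _ = x * (((w * x) * e) * (w * x)) := by rw [mul_assoc (w * x) e (w * x)]
      _ = x * (w * x) := by rw [ebandr (w * x) hgD hgg]
      _ = x := hxg
    calc (((x * w) * e) * ((e * x) * e)) * (e * (w * x))
        = ((x * w) * (e * ((e * x) * e))) * (e * (w * x)) := by
          rw [mul_assoc (x * w) e ((e * x) * e)]
    _ = ((x * w) * ((e * (e * x)) * e)) * (e * (w * x)) := by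
          rw [mul_assoc e (e * x) e]
    _ = ((x * w) * (((e * e) * x) * e)) * (e * (w * x)) := by
          rw [mul_assoc e e x]
    _ = ((x * w) * ((e * x) * e)) * (e * (w * x)) := by rw [hee]
    _ = (((x * w) * (e * x)) * e) * (e * (w * x)) := by
          rw [mul_assoc (x * w) (e * x) e]
    _ = (x * e) * (e * (w * x)) := by rw [hfex]
    _ = x * (e * (e * (w * x))) := by rw [mul_assoc]
    _ = x * ((e * e) * (w * x)) := by rw [mul_assoc e e (w * x)]
    _ = x * (e * (w * x)) := by rw [hee]
    _ = x := hxeg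
  exact { U := {h : S // h ∈ D ∧ h * h = h ∧ h * e = h}
          V := {h : S // h ∈ D ∧ h * h = h ∧ e * h = h}
          G := {g : S // g ∈ D ∧ e * g = g ∧ g * e = g}
          semU := instSemU
          semV := instSemV
          grpG := instGrpG
          left_zero := fun a b =>
            Subtype.ext (hUz a.1 b.1 a.2.1 a.2.2.1 a.2.2.2 b.2.1 b.2.2.1 b.2.2.2)
          right_zero := fun a b =>
            Subtype.ext (hVz a.1 b.1 a.2.1 a.2.2.1 a.2.2.2 b.2.1 b.2.2.1 b.2.2.2)
          iso := (MulEquiv.ofBijective ψ ⟨hinj, hsurj⟩).symm }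
end

section
/- Let D be a D-class of a semigroup S such that every element of D is regular and any two elements of D are L-related. Then D is closed under the multiplication of S, and D with the restricted multiplication is a left-group, i.e., isomorphic to a direct product of a left-zero semigroup and a group. -/
universe u

/-- A witness that the semigroup `S` is a left-group: an isomorphism of `S` with a direct
product `U × G` of a left-zero semigroup `U` and a group `G`. -/
structure LeftGroupWitness (S : Type u) [Mul S] where
  U : Type u
  G : Type u
  [semU : Semigroup U]
  [grpG : Group G]
  left_zero : ∀ x y : U, x * y = x
  iso : S ≃* U × G

/-- `S` is a left-group if it is isomorphic to `U × G` with `U` left-zero and `G` a group. -/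
def IsLeftGroup (S : Type u) [Mul S] : Prop :=
  Nonempty (LeftGroupWitness S)

section Aux

variable {S : Type u} [Semigroup S]

theorem leL_trans' {x y z : S} (h1 : leL x y) (h2 : leL y z) : leL x z := by
  rcases h1 with rfl | ⟨a, rfl⟩
  · exact h2
  · rcases h2 with rfl | ⟨b, rfl⟩
    · exact Or.inr ⟨a, rfl⟩
    · exact Or.inr ⟨a * b, (mul_assoc a b z).symm⟩

/-- Bundle of facts about a "left group" subset `D` with distinguished idempotent `e`. -/
class LGCtx (D : Set S) (e : S) : Prop where
  he : e ∈ D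
  hee : e * e = e
  closed : ∀ x ∈ D, ∀ y ∈ D, x * y ∈ D
  rid : ∀ x ∈ D, ∀ f ∈ D, f * f = f → x * f = x
  reg : ∀ x ∈ D, ∃ v, x = x * v * x ∧ x * v ∈ D
  linv : ∀ x ∈ D, ∃ b, e = b * x ∧ e * b ∈ D

/-- The left-zero part: idempotents of `D`. -/
abbrev EsetU (D : Set S) : Type u := {x : S // x ∈ D ∧ x * x = x}

/-- The group part: elements of `D` fixed by left multiplication by `e`. -/
abbrev GsetG (D : Set S) (e : S) : Type u := {x : S // x ∈ D ∧ e * x = x}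

instance esetSemigroup (D : Set S) : Semigroup (EsetU D) where
  mul a _ := a
  mul_assoc _ _ _ := rfl

noncomputable instance gsetGroup (D : Set S) (e : S) [h : LGCtx D e] :
    Group (GsetG D e) := by
  letI : Mul (GsetG D e) :=
    ⟨fun a b => ⟨a.1 * b.1, h.closed _ a.2.1 _ b.2.1, by rw [← mul_assoc, a.2.2]⟩⟩
  letI : One (GsetG D e) := ⟨⟨e, h.he, h.hee⟩⟩
  letI : Inv (GsetG D e) := ⟨fun a =>
    ⟨e * Classical.choose (h.linv a.1 a.2.1),
     (Classical.choose_spec (h.linv a.1 a.2.1)).2, by rw [← mul_assoc, h.hee]⟩⟩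
  exact Group.ofLeftAxioms
    (fun a b c => Subtype.ext (mul_assoc a.1 b.1 c.1))
    (fun a => Subtype.ext a.2.2)
    (fun a => Subtype.ext (by
      show (e * Classical.choose (h.linv a.1 a.2.1)) * a.1 = e
      rw [mul_assoc, ← (Classical.choose_spec (h.linv a.1 a.2.1)).1, h.hee]))

/-- Uniqueness of the idempotent left identity of an element of `D`. -/
theorem idem_eq (D : Set S) (e : S) [h : LGCtx D e] {x f v : S}
    (hf : f ∈ D) (hff : f * f = f) (hfx : f * x = x)
    (hxvx : x = x * v * x) (hxv : x * v ∈ D) : f = x * v := by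
  have hidem : (x * v) * (x * v) = x * v := by
    rw [← mul_assoc, ← hxvx]
  calc f = f * (x * v) := (h.rid f hf (x * v) hxv hidem).symm
    _ = (f * x) * v := (mul_assoc f x v).symm
    _ = x * v := by rw [hfx]

noncomputable def ctxIso (D : Set S) (e : S) [h : LGCtx D e]
    (T : Subsemigroup S) (hT : ∀ x, x ∈ T ↔ x ∈ D) :
    ↥T ≃* EsetU D × GsetG D e := by
  have mem : ∀ x : ↥T, (x : S) ∈ D := fun x => (hT x.1).1 x.2
  have spec : ∀ x : ↥T,
      (x : S) = x * Classical.choose (h.reg x.1 (mem x)) * x ∧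
        (x : S) * Classical.choose (h.reg x.1 (mem x)) ∈ D :=
    fun x => Classical.choose_spec (h.reg x.1 (mem x))
  refine
    { toFun := fun x =>
        (⟨x.1 * Classical.choose (h.reg x.1 (mem x)),
          (spec x).2, by rw [← mul_assoc, ← (spec x).1]⟩,
         ⟨e * x.1, h.closed e h.he x.1 (mem x), by rw [← mul_assoc, h.hee]⟩)
      invFun := fun p => ⟨p.1.1 * p.2.1, (hT _).2 (h.closed _ p.1.2.1 _ p.2.2.1)⟩
      left_inv := ?_
      right_inv := ?_
      map_mul' := ?_ }
  · intro x
    apply Subtype.ext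
    show (x.1 * Classical.choose (h.reg x.1 (mem x))) * (e * x.1) = x.1
    set v := Classical.choose (h.reg x.1 (mem x)) with hv
    have h1 : (x.1 * v) * e = x.1 * v := h.rid _ (spec x).2 e h.he h.hee
    calc (x.1 * v) * (e * x.1) = ((x.1 * v) * e) * x.1 := (mul_assoc _ _ _).symm
      _ = (x.1 * v) * x.1 := by rw [h1]
      _ = x.1 := ((spec x).1).symm
  · rintro ⟨f, g⟩
    set x : ↥T := ⟨f.1 * g.1, (hT _).2 (h.closed _ f.2.1 _ g.2.1)⟩ with hx
    refine Prod.ext (Subtype.ext ?_) (Subtype.ext ?_)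
    · -- (f*g) * v = f
      have hfx : f.1 * (x : S) = (x : S) := by
        show f.1 * (f.1 * g.1) = f.1 * g.1
        rw [← mul_assoc, f.2.2]
      exact (idem_eq D e f.2.1 f.2.2 hfx (spec x).1 (spec x).2).symm
    · -- e * (f*g) = g
      show e * (f.1 * g.1) = g.1
      have h1 : e * f.1 = e := h.rid e h.he f.1 f.2.1 f.2.2
      rw [← mul_assoc, h1, g.2.2]
  · intro x y
    refine Prod.ext (Subtype.ext ?_) (Subtype.ext ?_)
    · -- first component: (xy) * v(xy) = x * v(x)  (mul on EsetU is first proj)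
      show (x * y).1 * Classical.choose (h.reg (x * y).1 (mem (x * y))) =
        x.1 * Classical.choose (h.reg x.1 (mem x))
      have hfx : (x.1 * Classical.choose (h.reg x.1 (mem x))) * ((x : S) * y.1)
          = (x : S) * y.1 := by
        rw [← mul_assoc, ← (spec x).1]
      exact (idem_eq D e (spec x).2
        (by rw [← mul_assoc, ← (spec x).1]) hfx (spec (x * y)).1 (spec (x * y)).2).symm
    · show e * (x.1 * y.1) = (e * x.1) * (e * y.1)
      have hxe : x.1 * e = x.1 := h.rid x.1 (mem x) e h.he h.hee
      calc e * (x.1 * y.1) = e * ((x.1 * e) * y.1) := by rw [hxe]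
        _ = e * (x.1 * (e * y.1)) := by rw [mul_assoc x.1 e y.1]
        _ = (e * x.1) * (e * y.1) := by rw [← mul_assoc]

end Aux

/-- Let `D` be a `D`-class of a semigroup `S` such that every element of `D` is regular and
any two elements of `D` are `L`-related.  Then `D` is closed under multiplication, and `D`
with the restricted multiplication is a left-group. -/
theorem regular_Lclass_Dclass_is_left_group {S : Type u} [Semigroup S]
    (d : S) (D : Set S) (hD : D = {x | grD x d})
    (hreg : ∀ x ∈ D, ∃ u, x = x * u * x)
    (hL : ∀ x ∈ D, ∀ y ∈ D, grL x y) :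
    (∀ x ∈ D, ∀ y ∈ D, x * y ∈ D) ∧
    ∃ T : Subsemigroup S, (T : Set S) = D ∧ IsLeftGroup ↥T := by
  have hd : d ∈ D := by
    rw [hD]
    exact ⟨d, ⟨Or.inl rfl, Or.inl rfl⟩, Or.inl rfl, Or.inl rfl⟩
  have memR : ∀ {x z : S}, grR x z → z ∈ D → x ∈ D := by
    intro x z hR hz
    rw [hD]
    exact ⟨z, hR, hL z hz d hd⟩
  have memL : ∀ {x z : S}, grL x z → z ∈ D → x ∈ D := by
    intro x z hxz hz
    rw [hD]
    exact ⟨x, ⟨Or.inl rfl, Or.inl rfl⟩,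
      leL_trans' hxz.1 (hL z hz d hd).1, leL_trans' (hL z hz d hd).2 hxz.2⟩
  have reg' : ∀ x ∈ D, ∃ v, x = x * v * x ∧ x * v ∈ D := by
    intro x hx
    obtain ⟨v, hv⟩ := hreg x hx
    exact ⟨v, hv, memR ⟨Or.inr ⟨v, rfl⟩, Or.inr ⟨x, hv⟩⟩ hx⟩
  have rid : ∀ x ∈ D, ∀ f ∈ D, f * f = f → x * f = x := by
    intro x hx f hf hff
    rcases (hL x hx f hf).1 with h1 | ⟨a, ha⟩
    · rw [h1, hff, ← h1]
    · rw [ha, mul_assoc, hff]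
  have closure : ∀ x ∈ D, ∀ y ∈ D, x * y ∈ D := by
    intro x hx y hy
    obtain ⟨v, hv, hyv⟩ := reg' y hy
    have hfy : (y * v) * y = y := hv.symm
    rcases (hL (y * v) hyv x hx).1 with h1 | ⟨c, hc⟩
    · -- y * v = x, so x * y = y
      have : x * y = y := by rw [← h1, hfy]
      rw [this]; exact hy
    · -- y = c * (x * y)
      have hy2 : y = c * (x * y) := by
        rw [← mul_assoc, ← hc, hfy]
      exact memL ⟨Or.inr ⟨x, rfl⟩, Or.inr ⟨c, hy2⟩⟩ hy
  obtain ⟨v0, hv0, he⟩ := reg' d hd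
  set e := d * v0 with hedef
  have hee : e * e = e := by rw [← mul_assoc, ← hv0]
  have linv : ∀ x ∈ D, ∃ b, e = b * x ∧ e * b ∈ D := by
    intro x hx
    rcases (hL e he x hx).1 with h1 | ⟨b, hb⟩
    · refine ⟨e, by rw [← h1]; exact hee.symm, by rw [hee]; exact he⟩
    · refine ⟨b, hb, memR ⟨Or.inr ⟨b, rfl⟩, Or.inr ⟨x, ?_⟩⟩ he⟩
      rw [mul_assoc, ← hb, hee]
  haveI : LGCtx D e := ⟨he, hee, closure, rid, reg', linv⟩
  refine ⟨closure, ⟨D, fun ha hb => closure _ ha _ hb⟩, rfl, ?_⟩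
  exact ⟨{ U := EsetU D, G := GsetG D e, semU := inferInstance, grpG := inferInstance,
           left_zero := fun _ _ => rfl,
           iso := ctxIso D e _ (fun _ => Iff.rfl) }⟩
end

section
/- Let S be a regular *-semigroup and let a ∈ S. Then for every x ∈ S: (1) x ∈ P_1^a if and only if x*·x = x*·x·a·a*·x*·x (i.e., a·a* is a pre-inverse of x*·x); (2) x ∈ P_2^a if and only if x·x* = x·x*·a*·a·x·x* (i.e., a*·a is a pre-inverse of x·x*). -/
universe u

/-- `P_1^a = {x : x = x·a·z for some z}`. -/
def P1 {S : Type u} [Mul S] (a : S) : Set S := {x | ∃ z, x = x * a * z}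

/-- `P_2^a = {x : x = z·a·x for some z}`. -/
def P2 {S : Type u} [Mul S] (a : S) : Set S := {x | ∃ z, x = z * a * x}

/-- In a regular *-semigroup: (1) `x ∈ P_1^a` iff `x*·x = x*·x·a·a*·x*·x` (i.e. `a·a*` is a
pre-inverse of `x*·x`); (2) `x ∈ P_2^a` iff `x·x* = x·x*·a*·a·x·x*` (i.e. `a*·a` is a
pre-inverse of `x·x*`). -/
theorem mem_P1_iff_and_mem_P2_iff {S : Type u} [Semigroup S] (star : S → S)
    (hstar_star : ∀ x : S, star (star x) = x)
    (hstar_mul : ∀ x y : S, star (x * y) = star y * star x)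
    (hreg : ∀ x : S, x * star x * x = x)
    (a : S) (x : S) :
    (x ∈ P1 a ↔ star x * x = star x * x * a * star a * (star x * x)) ∧
    (x ∈ P2 a ↔ x * star x = x * star x * star a * a * (x * star x)) := by
  constructor
  · constructor
    · rintro ⟨z, hz⟩
      have key : star x * ((x * a) * star (x * a) * x) = star x * x := by
        calc star x * ((x * a) * star (x * a) * x)
            = star x * ((x * a) * star (x * a) * (x * a * z)) := by
              congr 2
          _ = star x * ((x * a) * star (x * a) * (x * a) * z) := by simp only [mul_assoc]
          _ = star x * ((x * a) * z) := by rw [hreg]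
          _ = star x * (x * a * z) := by simp only [mul_assoc]
          _ = star x * x := by rw [← hz]
      calc star x * x = star x * ((x * a) * star (x * a) * x) := key.symm
        _ = star x * x * a * star a * (star x * x) := by
            rw [hstar_mul]; simp only [mul_assoc]
    · intro h
      refine ⟨star a * (star x * x), ?_⟩
      calc x = x * star x * x := (hreg x).symm
        _ = x * (star x * x) := by rw [mul_assoc]
        _ = x * (star x * x * a * star a * (star x * x)) := by conv_lhs => rw [h]
        _ = x * star x * x * (a * star a * (star x * x)) := by simp only [mul_assoc]
        _ = x * (a * star a * (star x * x)) := by rw [hreg]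
        _ = x * a * (star a * (star x * x)) := by simp only [mul_assoc]
  · constructor
    · rintro ⟨z, hz⟩
      have hz' : x = z * (a * x) := by rw [← mul_assoc, ← hz]
      have hsx : star x = star (a * x) * star z := by
        conv_lhs => rw [hz', hstar_mul]
      have hw : star (a * x) * (a * x) * star (a * x) = star (a * x) := by
        have := hreg (star (a * x)); rwa [hstar_star] at this
      have key : x * (star (a * x) * (a * x) * star x) = x * star x := by
        calc x * (star (a * x) * (a * x) * star x)
            = x * (star (a * x) * (a * x) * (star (a * x) * star z)) := by
              conv_lhs => rw [hsx]
          _ = x * (star (a * x) * (a * x) * star (a * x) * star z) := by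
              simp only [mul_assoc]
          _ = x * (star (a * x) * star z) := by rw [hw]
          _ = x * star x := by rw [← hsx]
      calc x * star x = x * (star (a * x) * (a * x) * star x) := key.symm
        _ = x * star x * star a * a * (x * star x) := by
            rw [hstar_mul]; simp only [mul_assoc]
    · intro h
      refine ⟨x * star x * star a, ?_⟩
      calc x = x * star x * x := (hreg x).symm
        _ = x * star x * star a * a * (x * star x) * x := by conv_lhs => rw [h]
        _ = x * star x * star a * a * (x * star x * x) := by simp only [mul_assoc]
        _ = x * star x * star a * a * x := by rw [hreg]
end

section
/- Let S be a regular *-semigroup and let a ∈ S be a projection, i.e., a·a = a = a*. Let R = {x ∈ S : x = x·a·u·a·x for some u ∈ S} be the set of regular elements of the variant S^a. Then R is closed under the operation x ⋆_a y = x·a·y and under the involution x ↦ x*, and (R, ⋆_a, *) is itself a regular *-semigroup: for all x, y ∈ R one has (x·a·y)* = y*·a·x* and x = x·a·x*·a·x. -/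
universe u

/-- The set of regular elements of the variant `S^a`: those `x` with `x = x·a·u·a·x` for
some `u`. -/
def regVariant {S : Type u} [Mul S] (a : S) : Set S := {x | ∃ u, x = x * a * u * a * x}

private lemma aux_key {S : Type u} [Semigroup S] (a u x s : S)
    (hx : x = x * a * u * a * x)
    (hs : a * x * a * s * a * x * a = a * x * a) :
    x * a * s * a * x = x := by
  calc x * a * s * a * x
      = (x * a * u * a * x) * a * s * a * (x * a * u * a * x) := by rw [← hx]
    _ = x * a * u * (a * x * a * s * a * x * a) * u * a * x := by
        simp only [mul_assoc]
    _ = x * a * u * (a * x * a) * u * a * x := by rw [hs]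
    _ = (x * a * u * a * x) * a * u * a * x := by simp only [mul_assoc]
    _ = x := by rw [← hx]; exact hx.symm

private lemma aux_prod {S : Type u} [Semigroup S] (a x y s t : S)
    (hx : x = x * a * s * a * x) (hy : y = y * a * t * a * y)
    (hd : a * x * a * y * a * t * a * s * a * x * a * y * a = a * x * a * y * a) :
    x * a * y * a * t * a * s * a * x * a * y = x * a * y := by
  calc x * a * y * a * t * a * s * a * x * a * y
      = (x * a * s * a * x) * a * y * a * t * a * s * a * x * a * (y * a * t * a * y) := by
        rw [← hx, ← hy]
    _ = x * a * s * (a * x * a * y * a * t * a * s * a * x * a * y * a) * t * a * y := by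
        simp only [mul_assoc]
    _ = x * a * s * (a * x * a * y * a) * t * a * y := by rw [hd]
    _ = (x * a * s * a * x) * a * (y * a * t * a * y) := by simp only [mul_assoc]
    _ = x * a * y := by rw [← hx, ← hy]

/-- Let `S` be a regular *-semigroup and `a ∈ S` a projection (`a·a = a = a*`).  Let `R` be
the set of regular elements of the variant `S^a`.  Then `R` is closed under the sandwich
operation `x ⋆_a y = x·a·y` and under the involution, and `(R, ⋆_a, *)` is itself a regular
*-semigroup: for all `x, y ∈ R` one has `(x·a·y)* = y*·a·x*` and `x = x·a·x*·a·x`. -/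
theorem reg_variant_of_projection_is_regular_star_semigroup {S : Type u} [Semigroup S]
    (star : S → S)
    (hstar_star : ∀ x : S, star (star x) = x)
    (hstar_mul : ∀ x y : S, star (x * y) = star y * star x)
    (hreg : ∀ x : S, x * star x * x = x)
    (a : S) (ha_idem : a * a = a) (ha_star : star a = a) :
    (∀ x ∈ regVariant a, ∀ y ∈ regVariant a, x * a * y ∈ regVariant a) ∧
    (∀ x ∈ regVariant a, star x ∈ regVariant a) ∧
    (∀ x ∈ regVariant a, ∀ y ∈ regVariant a, star (x * a * y) = star y * a * star x) ∧
    (∀ x ∈ regVariant a, x = x * a * star x * a * x) := by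
  have haa : ∀ t : S, a * (a * t) = a * t := fun t => by rw [← mul_assoc, ha_idem]
  have L1 : ∀ x : S, a * x * a * star x * a * x * a = a * x * a := by
    intro x
    have h := hreg (a * x * a)
    have hst : star (a * x * a) = a * (star x * a) := by
      rw [hstar_mul, hstar_mul, ha_star]
    rw [hst] at h
    simp only [mul_assoc, haa] at h ⊢
    exact h
  have hstar3 : ∀ x y : S, star (x * a * y) = star y * a * star x := by
    intro x y
    rw [hstar_mul, hstar_mul, ha_star, mul_assoc]
  have key : ∀ x ∈ regVariant a, x * a * star x * a * x = x := by
    intro x hx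
    obtain ⟨u, hu⟩ := hx
    exact aux_key a u x (star x) hu (L1 x)
  refine ⟨?_, ?_, fun x _ y _ => hstar3 x y, fun x hx => (key x hx).symm⟩
  · intro x hx y hy
    refine ⟨star y * a * star x, ?_⟩
    have hd : a * x * a * y * a * star y * a * star x * a * x * a * y * a
        = a * x * a * y * a := by
      have h := L1 (x * a * y)
      rw [hstar3] at h
      simp only [mul_assoc] at h ⊢
      exact h
    have h := aux_prod a x y (star x) (star y) (key x hx).symm (key y hy).symm hd
    simp only [mul_assoc] at h ⊢
    exact h.symm
  · intro x hx
    refine ⟨x, ?_⟩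
    have h := congrArg star (key x hx)
    simp only [hstar_mul, hstar_star, ha_star, mul_assoc] at h ⊢
    exact h.symm
end

section
/- Let S be a semigroup and let a ∈ S admit a left- and right-identity, i.e., a = e·a and a = a·f for some e, f ∈ S. Then for all x, y ∈ S: (1) x ≤_{R^a} y if and only if x = y or x ≤_R y·a; (2) x ≤_{L^a} y if and only if x = y or x ≤_L a·y; (3) x ≤_{J^a} y if and only if x = y, or x ≤_R y·a, or x ≤_L a·y, or x ≤_J a·y·a. -/
universe u

/-- Green's `≤_R` preorder relative to a binary operation `op`. -/
def leRo {S : Type u} (op : S → S → S) (x y : S) : Prop := x = y ∨ ∃ a, x = op y a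

/-- Green's `≤_L` preorder relative to a binary operation `op`. -/
def leLo {S : Type u} (op : S → S → S) (x y : S) : Prop := x = y ∨ ∃ a, x = op a y

/-- Green's `≤_J` preorder relative to a binary operation `op`. -/
def leJo {S : Type u} (op : S → S → S) (x y : S) : Prop :=
  x = y ∨ (∃ a, x = op a y) ∨ (∃ b, x = op y b) ∨ ∃ a b, x = op (op a y) b

/-- Let `a ∈ S` admit a left- and right-identity.  Then in the variant `S^a` (with
operation `x ⋆_a y = x·a·y`): (1) `x ≤_{R^a} y ↔ x = y ∨ x ≤_R y·a`;
(2) `x ≤_{L^a} y ↔ x = y ∨ x ≤_L a·y`;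
(3) `x ≤_{J^a} y ↔ x = y ∨ x ≤_R y·a ∨ x ≤_L a·y ∨ x ≤_J a·y·a`. -/
theorem variant_green_preorders {S : Type u} [Semigroup S] (a : S)
    (he : ∃ e : S, a = e * a) (hf : ∃ f : S, a = a * f) (x y : S) :
    (leRo (fun u v : S => u * a * v) x y ↔
      (x = y ∨ leRo (fun u v : S => u * v) x (y * a))) ∧
    (leLo (fun u v : S => u * a * v) x y ↔
      (x = y ∨ leLo (fun u v : S => u * v) x (a * y))) ∧
    (leJo (fun u v : S => u * a * v) x y ↔
      (x = y ∨ leRo (fun u v : S => u * v) x (y * a) ∨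
        leLo (fun u v : S => u * v) x (a * y) ∨
        leJo (fun u v : S => u * v) x (a * y * a))) := by
  obtain ⟨e, he⟩ := he
  obtain ⟨f, hf⟩ := hf
  simp only [leRo, leLo, leJo]
  refine ⟨⟨?_, ?_⟩, ⟨?_, ?_⟩, ⟨?_, ?_⟩⟩
  · rintro (rfl | ⟨b, rfl⟩)
    · exact Or.inl rfl
    · exact Or.inr (Or.inr ⟨b, rfl⟩)
  · rintro (rfl | (rfl | ⟨b, rfl⟩))
    · exact Or.inl rfl
    · exact Or.inr ⟨f, by rw [mul_assoc, ← hf]⟩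
    · exact Or.inr ⟨b, rfl⟩
  · rintro (rfl | ⟨b, rfl⟩)
    · exact Or.inl rfl
    · exact Or.inr (Or.inr ⟨b, by rw [mul_assoc]⟩)
  · rintro (rfl | (rfl | ⟨b, rfl⟩))
    · exact Or.inl rfl
    · exact Or.inr ⟨e, by rw [← he]⟩
    · exact Or.inr ⟨b, by rw [mul_assoc]⟩
  · rintro (rfl | ⟨c, rfl⟩ | ⟨b, rfl⟩ | ⟨c, b, rfl⟩)
    · exact Or.inl rfl
    · exact Or.inr (Or.inr (Or.inl (Or.inr ⟨c, by rw [mul_assoc]⟩)))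
    · exact Or.inr (Or.inl (Or.inr ⟨b, rfl⟩))
    · exact Or.inr (Or.inr (Or.inr (Or.inr (Or.inr (Or.inr
        ⟨c, b, by simp only [mul_assoc]⟩)))))
  · rintro (rfl | (rfl | ⟨b, rfl⟩) | (rfl | ⟨c, rfl⟩) |
      (rfl | ⟨c, rfl⟩ | ⟨b, rfl⟩ | ⟨c, b, rfl⟩))
    · exact Or.inl rfl
    · exact Or.inr (Or.inr (Or.inl ⟨f, by rw [mul_assoc, ← hf]⟩))
    · exact Or.inr (Or.inr (Or.inl ⟨b, rfl⟩))
    · exact Or.inr (Or.inl ⟨e, by rw [← he]⟩)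
    · exact Or.inr (Or.inl ⟨c, by rw [mul_assoc]⟩)
    · refine Or.inr (Or.inr (Or.inr ⟨e, f, ?_⟩))
      simp only [mul_assoc]; rw [← hf, ← mul_assoc e a, ← he]
    · refine Or.inr (Or.inr (Or.inr ⟨c, f, ?_⟩))
      simp only [mul_assoc]; rw [← hf]
    · refine Or.inr (Or.inr (Or.inr ⟨e, b, ?_⟩))
      simp only [mul_assoc]; rw [← mul_assoc e a, ← he]
    · exact Or.inr (Or.inr (Or.inr ⟨c, b, by simp only [mul_assoc]⟩))
end

section
/- Let S be a semigroup and let a ∈ S admit a left- and right-identity, i.e., a = e·a and a = a·f for some e, f ∈ S. Then for all x, y ∈ S: (1) if x ∈ P_1^a, then x ≤_{J^a} y iff (x ≤_J a·y·a or x ≤_R y·a); (2) if x ∈ P_2^a, then x ≤_{J^a} y iff (x ≤_J a·y·a or x ≤_L a·y); (3) if x ∈ P_3^a, then x ≤_{J^a} y iff x ≤_J a·y·a; (4) if y ∈ P_1^a, then x ≤_{J^a} y iff (x ≤_J a·y or x ≤_R y); (5) if y ∈ P_2^a, then x ≤_{J^a} y iff (x ≤_J y·a or x ≤_L y); (6)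 if y ∈ P_3^a, then x ≤_{J^a} y iff x ≤_J y. -/
universe u

/-- Let `a ∈ S` admit a left- and right-identity.  Then for all `x, y ∈ S`:
(1) if `x ∈ P_1^a`, then `x ≤_{J^a} y ↔ (x ≤_J a·y·a ∨ x ≤_R y·a)`;
(2) if `x ∈ P_2^a`, then `x ≤_{J^a} y ↔ (x ≤_J a·y·a ∨ x ≤_L a·y)`;
(3) if `x ∈ P_3^a`, then `x ≤_{J^a} y ↔ x ≤_J a·y·a`;
(4) if `y ∈ P_1^a`, then `x ≤_{J^a} y ↔ (x ≤_J a·y ∨ x ≤_R y)`;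
(5) if `y ∈ P_2^a`, then `x ≤_{J^a} y ↔ (x ≤_J y·a ∨ x ≤_L y)`;
(6) if `y ∈ P_3^a`, then `x ≤_{J^a} y ↔ x ≤_J y`. -/
theorem variant_leJ_simplifications {S : Type u} [Semigroup S] (a : S)
    (he : ∃ e : S, a = e * a) (hf : ∃ f : S, a = a * f) (x y : S) :
    ((∃ z, x = x * a * z) →
      (leJo (fun u v : S => u * a * v) x y ↔
        (leJo (fun u v : S => u * v) x (a * y * a) ∨
          leRo (fun u v : S => u * v) x (y * a)))) ∧
    ((∃ z, x = z * a * x) →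
      (leJo (fun u v : S => u * a * v) x y ↔
        (leJo (fun u v : S => u * v) x (a * y * a) ∨
          leLo (fun u v : S => u * v) x (a * y)))) ∧
    ((∃ u v, x = u * a * x * a * v) →
      (leJo (fun u v : S => u * a * v) x y ↔
        leJo (fun u v : S => u * v) x (a * y * a))) ∧
    ((∃ z, y = y * a * z) →
      (leJo (fun u v : S => u * a * v) x y ↔
        (leJo (fun u v : S => u * v) x (a * y) ∨
          leRo (fun u v : S => u * v) x y))) ∧
    ((∃ z, y = z * a * y) →
      (leJo (fun u v : S => u * a * v) x y ↔
        (leJo (fun u v : S => u * v) x (y * a) ∨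
          leLo (fun u v : S => u * v) x y))) ∧
    ((∃ u v, y = u * a * y * a * v) →
      (leJo (fun u v : S => u * a * v) x y ↔
        leJo (fun u v : S => u * v) x y)) := by
  obtain ⟨e, he⟩ := he
  obtain ⟨f, hf⟩ := hf
  have ea : ∀ w : S, e * (a * w) = a * w := fun w => by rw [← mul_assoc, ← he]
  refine ⟨?_, ?_, ?_, ?_, ?_, ?_⟩
  -- Part 1 : x ∈ P₁
  · rintro ⟨z, hp⟩
    constructor
    · intro h
      simp only [leJo, leRo, leLo] at h ⊢
      obtain h | ⟨c, h⟩ | ⟨d, h⟩ | ⟨c, d, h⟩ := h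
      · exact Or.inr (Or.inr ⟨z, by conv_lhs => rw [hp]; rw [h]⟩)
      · exact Or.inl (Or.inr (Or.inr (Or.inr ⟨c, z, by
          conv_lhs => rw [hp]
          rw [h]; simp only [mul_assoc]⟩)))
      · exact Or.inr (Or.inr ⟨d, h⟩)
      · exact Or.inl (Or.inr (Or.inr (Or.inr ⟨c, d, by
          rw [h]; simp only [mul_assoc]⟩)))
    · intro h
      simp only [leJo, leRo, leLo] at h ⊢
      obtain (h | ⟨c, h⟩ | ⟨d, h⟩ | ⟨c, d, h⟩) | (h | ⟨d, h⟩) := h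
      · exact Or.inr (Or.inr (Or.inr ⟨e, f, by rw [h]; simp only [mul_assoc, ea, ← hf]⟩))
      · exact Or.inr (Or.inr (Or.inr ⟨c, f, by rw [h]; simp only [mul_assoc, ← hf]⟩))
      · exact Or.inr (Or.inr (Or.inr ⟨e, d, by rw [h]; simp only [mul_assoc, ea]⟩))
      · exact Or.inr (Or.inr (Or.inr ⟨c, d, by rw [h]; simp only [mul_assoc]⟩))
      · exact Or.inr (Or.inr (Or.inl ⟨a * z, by
          conv_lhs => rw [hp]
          rw [h]; simp only [mul_assoc]⟩))
      · exact Or.inr (Or.inr (Or.inl ⟨d, h⟩))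
  -- Part 2 : x ∈ P₂
  · rintro ⟨z, hp⟩
    constructor
    · intro h
      simp only [leJo, leRo, leLo] at h ⊢
      obtain h | ⟨c, h⟩ | ⟨d, h⟩ | ⟨c, d, h⟩ := h
      · exact Or.inr (Or.inr ⟨z, by
          conv_lhs => rw [hp]
          rw [h]; simp only [mul_assoc]⟩)
      · exact Or.inr (Or.inr ⟨c, by rw [h]; simp only [mul_assoc]⟩)
      · exact Or.inl (Or.inr (Or.inr (Or.inr ⟨z, d, by
          conv_lhs => rw [hp]
          rw [h]; simp only [mul_assoc]⟩)))
      · exact Or.inl (Or.inr (Or.inr (Or.inr ⟨c, d, by rw [h]; simp only [mul_assoc]⟩)))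
    · intro h
      simp only [leJo, leRo, leLo] at h ⊢
      obtain (h | ⟨c, h⟩ | ⟨d, h⟩ | ⟨c, d, h⟩) | (h | ⟨c, h⟩) := h
      · exact Or.inr (Or.inr (Or.inr ⟨e, f, by rw [h]; simp only [mul_assoc, ea, ← hf]⟩))
      · exact Or.inr (Or.inr (Or.inr ⟨c, f, by rw [h]; simp only [mul_assoc, ← hf]⟩))
      · exact Or.inr (Or.inr (Or.inr ⟨e, d, by rw [h]; simp only [mul_assoc, ea]⟩))
      · exact Or.inr (Or.inr (Or.inr ⟨c, d, by rw [h]; simp only [mul_assoc]⟩))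
      · exact Or.inr (Or.inl ⟨z * a, by
          conv_lhs => rw [hp]
          rw [h]; simp only [mul_assoc]⟩)
      · exact Or.inr (Or.inl ⟨c, by rw [h]; simp only [mul_assoc]⟩)
  -- Part 3 : x ∈ P₃
  · rintro ⟨u, v, hp⟩
    constructor
    · intro h
      simp only [leJo, leRo, leLo] at h ⊢
      obtain h | ⟨c, h⟩ | ⟨d, h⟩ | ⟨c, d, h⟩ := h
      · exact Or.inr (Or.inr (Or.inr ⟨u, v, by
          conv_lhs => rw [hp]
          rw [h]; simp only [mul_assoc]⟩))
      · exact Or.inr (Or.inr (Or.inr ⟨u * a * c, v, by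
          conv_lhs => rw [hp]
          rw [h]; simp only [mul_assoc]⟩))
      · exact Or.inr (Or.inr (Or.inr ⟨u, d * a * v, by
          conv_lhs => rw [hp]
          rw [h]; simp only [mul_assoc]⟩))
      · exact Or.inr (Or.inr (Or.inr ⟨u * a * c, d * a * v, by
          conv_lhs => rw [hp]
          rw [h]; simp only [mul_assoc]⟩))
    · intro h
      simp only [leJo, leRo, leLo] at h ⊢
      obtain h | ⟨c, h⟩ | ⟨d, h⟩ | ⟨c, d, h⟩ := h
      · exact Or.inr (Or.inr (Or.inr ⟨e, f, by rw [h]; simp only [mul_assoc, ea, ← hf]⟩))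
      · exact Or.inr (Or.inr (Or.inr ⟨c, f, by rw [h]; simp only [mul_assoc, ← hf]⟩))
      · exact Or.inr (Or.inr (Or.inr ⟨e, d, by rw [h]; simp only [mul_assoc, ea]⟩))
      · exact Or.inr (Or.inr (Or.inr ⟨c, d, by rw [h]; simp only [mul_assoc]⟩))
  -- Part 4 : y ∈ P₁
  · rintro ⟨z, hp⟩
    constructor
    · intro h
      simp only [leJo, leRo, leLo] at h ⊢
      obtain h | ⟨c, h⟩ | ⟨d, h⟩ | ⟨c, d, h⟩ := h
      · exact Or.inr (Or.inl h)
      · exact Or.inl (Or.inr (Or.inl ⟨c, by rw [h]; simp only [mul_assoc]⟩))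
      · exact Or.inr (Or.inr ⟨a * d, by rw [h]; simp only [mul_assoc]⟩)
      · exact Or.inl (Or.inr (Or.inr (Or.inr ⟨c, a * d, by rw [h]; simp only [mul_assoc]⟩)))
    · intro h
      simp only [leJo, leRo, leLo] at h ⊢
      obtain (h | ⟨c, h⟩ | ⟨d, h⟩ | ⟨c, d, h⟩) | (h | ⟨d, h⟩) := h
      · exact Or.inr (Or.inl ⟨e, by rw [h]; simp only [mul_assoc, ea]⟩)
      · exact Or.inr (Or.inl ⟨c, by rw [h]; simp only [mul_assoc]⟩)
      · exact Or.inr (Or.inr (Or.inr ⟨e, z * d, by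
          rw [h]
          conv_lhs => rw [hp]
          simp only [mul_assoc, ea]⟩))
      · exact Or.inr (Or.inr (Or.inr ⟨c, z * d, by
          rw [h]
          conv_lhs => rw [hp]
          simp only [mul_assoc]⟩))
      · exact Or.inl h
      · exact Or.inr (Or.inr (Or.inl ⟨z * d, by
          rw [h]
          conv_lhs => rw [hp]
          simp only [mul_assoc]⟩))
  -- Part 5 : y ∈ P₂
  · rintro ⟨z, hp⟩
    constructor
    · intro h
      simp only [leJo, leRo, leLo] at h ⊢
      obtain h | ⟨c, h⟩ | ⟨d, h⟩ | ⟨c, d, h⟩ := h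
      · exact Or.inr (Or.inl h)
      · exact Or.inr (Or.inr ⟨c * a, h⟩)
      · exact Or.inl (Or.inr (Or.inr (Or.inl ⟨d, h⟩)))
      · exact Or.inl (Or.inr (Or.inr (Or.inr ⟨c * a, d, by rw [h]; simp only [mul_assoc]⟩)))
    · intro h
      simp only [leJo, leRo, leLo] at h ⊢
      obtain (h | ⟨c, h⟩ | ⟨d, h⟩ | ⟨c, d, h⟩) | (h | ⟨c, h⟩) := h
      · exact Or.inr (Or.inr (Or.inl ⟨f, by rw [h]; simp only [mul_assoc, ← hf]⟩))
      · exact Or.inr (Or.inr (Or.inr ⟨c * z, f, by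
          rw [h]
          conv_lhs => rw [hp]
          simp only [mul_assoc, ← hf]⟩))
      · exact Or.inr (Or.inr (Or.inl ⟨d, h⟩))
      · exact Or.inr (Or.inr (Or.inr ⟨c * z, d, by
          rw [h]
          conv_lhs => rw [hp]
          simp only [mul_assoc]⟩))
      · exact Or.inl h
      · exact Or.inr (Or.inl ⟨c * z, by
          rw [h]
          conv_lhs => rw [hp]
          simp only [mul_assoc]⟩)
  -- Part 6 : y ∈ P₃
  · rintro ⟨u, v, hp⟩
    constructor
    · intro h
      simp only [leJo, leRo, leLo] at h ⊢
      obtain h | ⟨c, h⟩ | ⟨d, h⟩ | ⟨c, d, h⟩ := h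
      · exact Or.inl h
      · exact Or.inr (Or.inl ⟨c * a, h⟩)
      · exact Or.inr (Or.inr (Or.inl ⟨a * d, by rw [h]; simp only [mul_assoc]⟩))
      · exact Or.inr (Or.inr (Or.inr ⟨c * a, a * d, by rw [h]; simp only [mul_assoc]⟩))
    · intro h
      simp only [leJo, leRo, leLo] at h ⊢
      obtain h | ⟨c, h⟩ | ⟨d, h⟩ | ⟨c, d, h⟩ := h
      · exact Or.inl h
      · exact Or.inr (Or.inr (Or.inr ⟨c * u, v, by
          rw [h]
          conv_lhs => rw [hp]
          simp only [mul_assoc]⟩))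
      · exact Or.inr (Or.inr (Or.inr ⟨u, v * d, by
          rw [h]
          conv_lhs => rw [hp]
          simp only [mul_assoc]⟩))
      · exact Or.inr (Or.inr (Or.inr ⟨c * u, v * d, by
          rw [h]
          conv_lhs => rw [hp]
          simp only [mul_assoc]⟩))
end

section
/- Let S be a semigroup and let a ∈ S be regular. Suppose x ∈ S satisfies x ≤_J a and the J^a-class of x is maximal, i.e., for all y ∈ S, x ≤_{J^a} y implies y ≤_{J^a} x. Then every b ∈ Pre(a) (i.e., every b with a = a·b·a) satisfies b J^a x; in particular any two elements x with these properties are J^a-related (so there is at most one such 'nontrivial' maximal J^a-class), and the J^a-class of x contains an idempotent of S^a (an element z with z = z·a·z). -/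
universe u

/-- Green's `J` relation relative to `op`. -/
def grJo {S : Type u} (op : S → S → S) (x y : S) : Prop := leJo op x y ∧ leJo op y x

section Aux
variable {S : Type u} [Semigroup S] (a : S)

lemma leJo_a_trans {x y z : S}
    (h1 : leJo (fun u v : S => u * a * v) x y)
    (h2 : leJo (fun u v : S => u * a * v) y z) :
    leJo (fun u v : S => u * a * v) x z := by
  simp only [leJo] at *
  rcases h1 with rfl | ⟨p, rfl⟩ | ⟨q, rfl⟩ | ⟨p, q, rfl⟩ <;>
    rcases h2 with rfl | ⟨r, rfl⟩ | ⟨s, rfl⟩ | ⟨r, s, rfl⟩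
  · exact Or.inl rfl
  · exact Or.inr (Or.inl ⟨r, rfl⟩)
  · exact Or.inr (Or.inr (Or.inl ⟨s, rfl⟩))
  · exact Or.inr (Or.inr (Or.inr ⟨r, s, rfl⟩))
  · exact Or.inr (Or.inl ⟨p, rfl⟩)
  · exact Or.inr (Or.inl ⟨p * a * r, by simp [mul_assoc]⟩)
  · exact Or.inr (Or.inr (Or.inr ⟨p, s, by simp [mul_assoc]⟩))
  · exact Or.inr (Or.inr (Or.inr ⟨p * a * r, s, by simp [mul_assoc]⟩))
  · exact Or.inr (Or.inr (Or.inl ⟨q, rfl⟩))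
  · exact Or.inr (Or.inr (Or.inr ⟨r, q, by simp [mul_assoc]⟩))
  · exact Or.inr (Or.inr (Or.inl ⟨s * a * q, by simp [mul_assoc]⟩))
  · exact Or.inr (Or.inr (Or.inr ⟨r, s * a * q, by simp [mul_assoc]⟩))
  · exact Or.inr (Or.inr (Or.inr ⟨p, q, rfl⟩))
  · exact Or.inr (Or.inr (Or.inr ⟨p * a * r, q, by simp [mul_assoc]⟩))
  · exact Or.inr (Or.inr (Or.inr ⟨p, s * a * q, by simp [mul_assoc]⟩))
  · exact Or.inr (Or.inr (Or.inr ⟨p * a * r, s * a * q, by simp [mul_assoc]⟩))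

lemma key_lemma (u : S) (hu : a = a * u * a) {x : S}
    (hx : leJo (fun p q : S => p * q) x a) (b : S) (hb : a = a * b * a) :
    leJo (fun p q : S => p * a * q) x b := by
  have h : ∃ p q : S, x = p * a * q := by
    have haua : (a * u) * a * (u * a) = a := by
      rw [show (a*u)*a*(u*a) = (a*u*a)*u*a by simp [mul_assoc], ← hu, ← hu]
    rcases hx with h | ⟨c, h⟩ | ⟨d, h⟩ | ⟨c, d, h⟩
    · exact ⟨a * u, u * a, by rw [h, haua]⟩
    · exact ⟨c, u * a, by
        rw [h]; show c * a = c * a * (u * a)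
        conv_lhs => rw [hu]
        simp [mul_assoc]⟩
    · exact ⟨a * u, d, by
        rw [h]; show a * d = a * u * a * d
        conv_lhs => rw [hu]⟩
    · exact ⟨c, d, h⟩
  obtain ⟨p, q, rfl⟩ := h
  refine Or.inr (Or.inr (Or.inr ⟨p, q, ?_⟩))
  show p * a * q = p * a * b * a * q
  rw [mul_assoc (p*a) b a, mul_assoc p a (b*a), ← mul_assoc a b a, ← hb]



end Aux

/-- Let `a ∈ S` be regular and suppose `x ≤_J a` has a maximal `J^a`-class.  Then every
pre-inverse `b` of `a` is `J^a`-related to `x`; any two such elements `x` are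
`J^a`-related; and the `J^a`-class of `x` contains an idempotent of `S^a`. -/
theorem nontrivial_maximal_Ja_class_properties {S : Type u} [Semigroup S] (a : S)
    (ha : ∃ u, a = a * u * a)
    (x : S) (hx : leJo (fun u v : S => u * v) x a)
    (hmax : ∀ y : S, leJo (fun u v : S => u * a * v) x y →
      leJo (fun u v : S => u * a * v) y x) :
    (∀ b : S, a = a * b * a → grJo (fun u v : S => u * a * v) b x) ∧
    (∀ x' : S, leJo (fun u v : S => u * v) x' a →
      (∀ y : S, leJo (fun u v : S => u * a * v) x' y →
        leJo (fun u v : S => u * a * v) y x') →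
      grJo (fun u v : S => u * a * v) x x') ∧
    (∃ z : S, grJo (fun u v : S => u * a * v) x z ∧ z = z * a * z) := by
  obtain ⟨u, hu⟩ := ha
  have kx := fun b hb => key_lemma a u hu hx b hb
  refine ⟨fun b hb => ⟨hmax b (kx b hb), kx b hb⟩, ?_, ?_⟩
  · intro x' hx' hmax'
    have kx' := fun b hb => key_lemma a u hu hx' b hb
    exact ⟨leJo_a_trans a (kx u hu) (hmax' u (kx' u hu)),
      leJo_a_trans a (kx' u hu) (hmax u (kx u hu))⟩
  · refine ⟨u * a * u, ⟨?_, ?_⟩, ?_⟩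
    · have hz : a = a * (u * a * u) * a := by
        rw [show a * (u*a*u) * a = (a*u*a) * (u*a) by simp [mul_assoc], ← hu]
        conv_lhs => rw [hu]
        simp [mul_assoc]
      exact kx (u*a*u) hz
    · have hz : a = a * (u * a * u) * a := by
        rw [show a * (u*a*u) * a = (a*u*a) * (u*a) by simp [mul_assoc], ← hu]
        conv_lhs => rw [hu]
        simp [mul_assoc]
      exact hmax (u*a*u) (kx (u*a*u) hz)
    · rw [show u*a*u * a * (u*a*u) = u * (a*u*a) * (u * (a * u)) by simp [mul_assoc], ← hu]
      rw [show u * a * (u * (a * u)) = u * (a*u*a) * u by simp [mul_assoc], ← hu]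
end

section
/- Let S be a semigroup and let a ∈ S be regular. Then the following are equivalent: (1) there exists x ∈ S such that x ≤_J a and the J^a-class of x is maximal (for all y ∈ S, x ≤_{J^a} y implies y ≤_{J^a} x); (2) for all x ∈ S, a ≤_J a·x·a implies x ≤_J a; (3) for all x ∈ S, a J a·x·a implies x J a. -/
universe u

lemma leJo_mul_trans {S : Type u} [Semigroup S] {x y z : S}
    (h1 : leJo (fun u v : S => u * v) x y) (h2 : leJo (fun u v : S => u * v) y z) :
    leJo (fun u v : S => u * v) x z := by
  simp only [leJo] at h1 h2 ⊢
  obtain rfl | ⟨c, rfl⟩ | ⟨b, rfl⟩ | ⟨c, b, rfl⟩ := h1 <;>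
    obtain rfl | ⟨p, rfl⟩ | ⟨q, rfl⟩ | ⟨p, q, rfl⟩ := h2
  · exact Or.inl rfl
  · exact Or.inr (Or.inl ⟨p, rfl⟩)
  · exact Or.inr (Or.inr (Or.inl ⟨q, rfl⟩))
  · exact Or.inr (Or.inr (Or.inr ⟨p, q, rfl⟩))
  · exact Or.inr (Or.inl ⟨c, rfl⟩)
  · exact Or.inr (Or.inl ⟨c * p, by simp [mul_assoc]⟩)
  · exact Or.inr (Or.inr (Or.inr ⟨c, q, by simp [mul_assoc]⟩))
  · exact Or.inr (Or.inr (Or.inr ⟨c * p, q, by simp [mul_assoc]⟩))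
  · exact Or.inr (Or.inr (Or.inl ⟨b, rfl⟩))
  · exact Or.inr (Or.inr (Or.inr ⟨p, b, by simp [mul_assoc]⟩))
  · exact Or.inr (Or.inr (Or.inl ⟨q * b, by simp [mul_assoc]⟩))
  · exact Or.inr (Or.inr (Or.inr ⟨p, q * b, by simp [mul_assoc]⟩))
  · exact Or.inr (Or.inr (Or.inr ⟨c, b, rfl⟩))
  · exact Or.inr (Or.inr (Or.inr ⟨c * p, b, by simp [mul_assoc]⟩))
  · exact Or.inr (Or.inr (Or.inr ⟨c, q * b, by simp [mul_assoc]⟩))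
  · exact Or.inr (Or.inr (Or.inr ⟨c * p, q * b, by simp [mul_assoc]⟩))

/-- Any `y ≤_J a` with `a` regular factors as `s * a * t`. -/
lemma leJo_factor {S : Type u} [Semigroup S] {a y w : S} (hw : a = a * w * a)
    (h : leJo (fun u v : S => u * v) y a) : ∃ s t, y = s * a * t := by
  obtain h | ⟨c, h⟩ | ⟨b, h⟩ | ⟨c, b, h⟩ := h
  · refine ⟨a * w, w * a, ?_⟩
    rw [h]
    simp only [← mul_assoc, ← hw]
  · refine ⟨c, w * a, ?_⟩
    rw [h]
    show c * a = c * a * (w * a)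
    rw [mul_assoc c a, ← mul_assoc a w a, ← hw]
  · refine ⟨a * w, b, ?_⟩
    rw [h]
    simp only [← mul_assoc, ← hw]
  · exact ⟨c, b, h⟩

/-- Let `a ∈ S` be regular.  The following are equivalent: (1) there is `x ≤_J a` whose
`J^a`-class is maximal; (2) `a ≤_J a·x·a` implies `x ≤_J a` for all `x`;
(3) `a J a·x·a` implies `x J a` for all `x`. -/
theorem exists_nontrivial_maximal_Ja_class_iff {S : Type u} [Semigroup S] (a : S)
    (ha : ∃ u, a = a * u * a) :
    ((∃ x : S, leJo (fun u v : S => u * v) x a ∧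
        ∀ y : S, leJo (fun u v : S => u * a * v) x y →
          leJo (fun u v : S => u * a * v) y x) ↔
      (∀ x : S, leJo (fun u v : S => u * v) a (a * x * a) →
        leJo (fun u v : S => u * v) x a)) ∧
    ((∀ x : S, leJo (fun u v : S => u * v) a (a * x * a) →
        leJo (fun u v : S => u * v) x a) ↔
      (∀ x : S, grJo (fun u v : S => u * v) a (a * x * a) →
        grJo (fun u v : S => u * v) x a)) := by
  obtain ⟨u, hu⟩ := ha
  constructor
  · constructor
    · -- (1) → (2)
      rintro ⟨x₀, hx₀a, hmax⟩ x hax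
      obtain ⟨s, t, hst⟩ := leJo_factor hu hx₀a
      -- x₀ ≤_{J^a} x
      have h1 : leJo (fun u v : S => u * a * v) x₀ x := by
        refine Or.inr (Or.inr (Or.inr ?_))
        obtain h | ⟨c, h⟩ | ⟨b, h⟩ | ⟨c, b, h⟩ := hax
        · refine ⟨s, t, ?_⟩
          rw [hst]
          conv_lhs => rw [h]
          simp only [← mul_assoc]
        · refine ⟨s * c, t, ?_⟩
          rw [hst]
          conv_lhs => rw [h]
          simp only [← mul_assoc]
        · refine ⟨s, b * t, ?_⟩
          rw [hst]
          conv_lhs => rw [h]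
          simp only [← mul_assoc]
        · refine ⟨s * c, b * t, ?_⟩
          rw [hst]
          conv_lhs => rw [h]
          simp only [← mul_assoc]
      have h2 := hmax x h1
      have hx₀ : leJo (fun u v : S => u * v) x x₀ := by
        obtain h | ⟨c, h⟩ | ⟨b, h⟩ | ⟨c, b, h⟩ := h2
        · exact Or.inl h
        · exact Or.inr (Or.inl ⟨c * a, by rw [h]⟩)
        · exact Or.inr (Or.inr (Or.inl ⟨a * b, by rw [h]; simp only [← mul_assoc]⟩))
        · exact Or.inr (Or.inr (Or.inr ⟨c * a, a * b, by rw [h]; simp only [← mul_assoc]⟩))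
      exact leJo_mul_trans hx₀ hx₀a
    · -- (2) → (1): witness u
      intro h2
      have hua : leJo (fun u v : S => u * v) u a := h2 u (Or.inl hu)
      refine ⟨u, hua, fun y hy => ?_⟩
      have haya : leJo (fun u v : S => u * v) a (a * y * a) := by
        obtain h | ⟨c, h⟩ | ⟨b, h⟩ | ⟨c, b, h⟩ := hy
        · rw [← h]; exact Or.inl hu
        · refine Or.inr (Or.inl ⟨a * c, ?_⟩)
          conv_lhs => rw [hu, h]
          simp only [← mul_assoc]
        · refine Or.inr (Or.inr (Or.inl ⟨b * a, ?_⟩))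
          conv_lhs => rw [hu, h]
          simp only [← mul_assoc]
        · refine Or.inr (Or.inr (Or.inr ⟨a * c, b * a, ?_⟩))
          conv_lhs => rw [hu, h]
          simp only [← mul_assoc]
      have hya := h2 y haya
      obtain ⟨s, t, hst⟩ := leJo_factor hu hya
      refine Or.inr (Or.inr (Or.inr ⟨s, t, ?_⟩))
      rw [hst]
      conv_lhs => rw [hu]
      simp only [← mul_assoc]
  · constructor
    · -- (2) → (3)
      intro h2 x hx
      obtain ⟨hax, hxa⟩ := hx
      refine ⟨h2 x hax, ?_⟩
      have h3 : leJo (fun u v : S => u * v) (a * x * a) x :=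
        Or.inr (Or.inr (Or.inr ⟨a, a, rfl⟩))
      exact leJo_mul_trans hax h3
    · -- (3) → (2)
      intro h3 x hax
      have hg : grJo (fun u v : S => u * v) a (a * x * a) :=
        ⟨hax, Or.inr (Or.inl ⟨a * x, rfl⟩)⟩
      exact (h3 x hg).1
end

section
/- Let S be a stable semigroup and let a, x ∈ S. Then: (1) a J a·x·a if and only if a H a·x·a; (2) if a J x, then x = x·a·x if and only if a = a·x·a. -/
universe u

/-- Green's `H` relation: `x H y` iff `x R y` and `x L y`. -/
def grH {S : Type u} [Mul S] (x y : S) : Prop := grR x y ∧ grL x y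

lemma leR_leJ {S : Type u} [Mul S] {x y : S} (h : leR x y) : leJ x y := by
  rcases h with rfl | ⟨c, rfl⟩
  · exact Or.inl rfl
  · exact Or.inr (Or.inr (Or.inl ⟨c, rfl⟩))

lemma key_aux {S : Type u} [Semigroup S] (hstable : IsStable S) {a x : S}
    (hJ : grJ a x) (hx : x = x * a * x) : a = a * x * a := by
  -- Step 1: a J a*x
  have hJax : grJ a (a * x) := by
    constructor
    · rcases hJ.1 with ha | ⟨p, hp⟩ | ⟨q, hq⟩ | ⟨p, q, hpq⟩
      · refine Or.inr (Or.inl ⟨x, ?_⟩)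
        calc a = x := ha
          _ = x * a * x := hx
          _ = x * (a * x) := by simp only [mul_assoc]
      · refine Or.inr (Or.inl ⟨p * x, ?_⟩)
        calc a = p * x := hp
          _ = p * (x * a * x) := by rw [← hx]
          _ = p * x * (a * x) := by simp only [mul_assoc]
      · refine Or.inr (Or.inr (Or.inr ⟨x, q, ?_⟩))
        calc a = x * q := hq
          _ = x * a * x * q := by rw [← hx]
          _ = x * (a * x) * q := by simp only [mul_assoc]
      · refine Or.inr (Or.inr (Or.inr ⟨p * x, q, ?_⟩))
        calc a = p * x * q := hpq
          _ = p * (x * a * x) * q := by rw [← hx]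
          _ = p * x * (a * x) * q := by simp only [mul_assoc]
    · exact Or.inr (Or.inr (Or.inl ⟨x, rfl⟩))
  -- Step 2: a R a*x by stability
  have hRax : grR a (a * x) := (hstable a x).1 hJax
  rcases hRax.1 with hax | ⟨t, ht⟩
  · -- a = a*x; then a = a*a and a*x*a = a*a = a
    have haa : a = a * a := by
      calc a = a * x := hax
        _ = a * (x * a * x) := by rw [← hx]
        _ = (a * x) * (a * x) := by simp only [mul_assoc]
        _ = a * a := by rw [← hax]
    calc a = a * a := haa
      _ = a * x * a := by rw [← hax]
  · -- a = a*x*t = (a*x*a)*(x*t)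
    have h1 : a = a * x * a * (x * t) := by
      calc a = a * x * t := ht
        _ = a * (x * a * x) * t := by rw [← hx]
        _ = a * x * a * (x * t) := by simp only [mul_assoc]
    have hJaxa : grJ a (a * x * a) := by
      constructor
      · exact Or.inr (Or.inr (Or.inl ⟨x * t, h1⟩))
      · exact Or.inr (Or.inl ⟨a * x, by simp only [mul_assoc]⟩)
    have hRaxa : grR a (a * x * a) := by
      have h := (hstable a (x * a)).1
      rw [← mul_assoc] at h
      exact h hJaxa
    rcases hRaxa.1 with h | ⟨w, hw⟩
    · exact h
    · have h2 : a * x * a * x = a * x := by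
        calc a * x * a * x = a * (x * a * x) := by simp only [mul_assoc]
          _ = a * x := by rw [← hx]
      have h3 : a * x * a = a := by
        calc a * x * a = a * x * (a * x * a * w) := by rw [← hw]
          _ = a * x * a * x * (a * w) := by simp only [mul_assoc]
          _ = a * x * (a * w) := by rw [h2]
          _ = a * x * a * w := by simp only [mul_assoc]
          _ = a := hw.symm
      exact h3.symm

/-- In a stable semigroup: (1) `a J a·x·a ↔ a H a·x·a`; (2) if `a J x`, then
`x = x·a·x ↔ a = a·x·a`. -/
theorem stable_axa {S : Type u} [Semigroup S] (hstable : IsStable S) (a x : S) :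
    (grJ a (a * x * a) ↔ grH a (a * x * a)) ∧
    (grJ a x → (x = x * a * x ↔ a = a * x * a)) := by
  constructor
  · constructor
    · intro hJ
      constructor
      · have h := (hstable a (x * a)).1
        rw [← mul_assoc] at h
        exact h hJ
      · exact (hstable a (a * x)).2 hJ
    · intro hH
      exact ⟨leR_leJ hH.1.1, leR_leJ hH.1.2⟩
  · intro hJ
    constructor
    · exact key_aux hstable hJ
    · exact key_aux hstable ⟨hJ.2, hJ.1⟩
end

section
/- Let S be a stable semigroup in which Green's relation H is trivial (x H y implies x = y), and let a ∈ S be regular. Then the following are equivalent: (1) there exists x ∈ S with x ≤_J a whose J^a-class is maximal (for all y, x ≤_{J^a} y implies y ≤_{J^a} x); (2) every x ∈ S with a = a·x·a satisfies x J a; (3) every x ∈ S with a = a·x·a satisfies x = x·a·x, i.e., Pre(a) = V(a). -/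
universe u

/-- Green's `R` relation relative to `op`. -/
def grRo {S : Type u} (op : S → S → S) (x y : S) : Prop := leRo op x y ∧ leRo op y x

/-- Green's `L` relation relative to `op`. -/
def grLo {S : Type u} (op : S → S → S) (x y : S) : Prop := leLo op x y ∧ leLo op y x

/-- Green's `H` relation relative to `op`. -/
def grHo {S : Type u} (op : S → S → S) (x y : S) : Prop := grRo op x y ∧ grLo op x y

/-- Stability relative to `op`. -/
def StableOp {S : Type u} (op : S → S → S) : Prop :=
  ∀ x u : S, (grJo op x (op x u) → grRo op x (op x u)) ∧
    (grJo op x (op u x) → grLo op x (op u x))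

/-- In a stable `H`-trivial semigroup, if `a ≤_J a*y*a` then `a = a*y*a`. -/
lemma eq_sandwich_of_leJ {S : Type u} [Semigroup S]
    (hstable : StableOp (fun u v : S => u * v))
    (hH : ∀ x y : S, grHo (fun u v : S => u * v) x y → x = y)
    {a y : S} (h1 : leJo (fun u v : S => u * v) a (a * y * a)) : a = a * y * a := by
  have hJ : grJo (fun u v : S => u * v) a (a * y * a) :=
    ⟨h1, Or.inr (Or.inl ⟨a * y, rfl⟩)⟩
  have hR : grRo (fun u v : S => u * v) a (a * y * a) := by
    have hs := (hstable a (y * a)).1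
    simp only [← mul_assoc] at hs
    exact hs hJ
  have hL : grLo (fun u v : S => u * v) a (a * y * a) := by
    have hs := (hstable a (a * y)).2
    exact hs hJ
  exact hH a (a * y * a) ⟨hR, hL⟩

/-- In a stable `H`-trivial semigroup, a pre-inverse of `a` that lies `≤_J a`
is a post-inverse of `a`. -/
lemma post_of_pre_leJ {S : Type u} [Semigroup S]
    (hstable : StableOp (fun u v : S => u * v))
    (hH : ∀ x y : S, grHo (fun u v : S => u * v) x y → x = y)
    {a x : S} (hx : a = a * x * a) (hxa : leJo (fun u v : S => u * v) x a) :
    x = x * a * x := by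
  have hx3 : a * (x * a) = a := by rw [← mul_assoc]; exact hx.symm
  have hx4 : ∀ w : S, a * (x * (a * w)) = a * w := fun w => by
    rw [← mul_assoc, ← mul_assoc, ← hx]
  have haxax : leJo (fun u v : S => u * v) a (x * (a * x)) :=
    Or.inr (Or.inr (Or.inr ⟨a, a, by simp only [mul_assoc, hx4, hx3]⟩))
  have h1 : leJo (fun u v : S => u * v) x (x * (a * x)) := leJo_mul_trans hxa haxax
  have h2 : leJo (fun u v : S => u * v) (x * (a * x)) x :=
    Or.inr (Or.inl ⟨x * a, (mul_assoc x a x).symm⟩)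
  have hJ : grJo (fun u v : S => u * v) x (x * (a * x)) := ⟨h1, h2⟩
  have hR : grRo (fun u v : S => u * v) x (x * (a * x)) := (hstable x (a * x)).1 hJ
  have hL : grLo (fun u v : S => u * v) x (x * (a * x)) := by
    have hs := (hstable x (x * a)).2
    simp only [mul_assoc] at hs
    exact hs hJ
  have := hH x (x * (a * x)) ⟨hR, hL⟩
  rw [mul_assoc]; exact this

/-- Let `S` be a stable, `H`-trivial semigroup and `a ∈ S` regular.  The following are
equivalent: (1) there is `x ≤_J a` whose `J^a`-class is maximal; (2) every pre-inverse of
`a` is `J`-related to `a`; (3) every pre-inverse of `a` is a post-inverse of `a`, i.e.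
`Pre(a) = V(a)`. -/
theorem exists_nontrivial_maximal_Ja_class_iff_of_H_trivial {S : Type u} [Semigroup S]
    (hstable : StableOp (fun u v : S => u * v))
    (hH : ∀ x y : S, grHo (fun u v : S => u * v) x y → x = y)
    (a : S) (ha : ∃ u, a = a * u * a) :
    ((∃ x : S, leJo (fun u v : S => u * v) x a ∧
        ∀ y : S, leJo (fun u v : S => u * a * v) x y →
          leJo (fun u v : S => u * a * v) y x) ↔
      (∀ x : S, a = a * x * a → grJo (fun u v : S => u * v) x a)) ∧
    ((∀ x : S, a = a * x * a → grJo (fun u v : S => u * v) x a) ↔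
      (∀ x : S, a = a * x * a → x = x * a * x)) := by
  constructor
  · constructor
    · -- (1) → (2)
      rintro ⟨x₀, hx₀a, hmax⟩ x hx
      have hx3 : a * (x * a) = a := by rw [← mul_assoc]; exact hx.symm
      have hx4 : ∀ w : S, a * (x * (a * w)) = a * w := fun w => by
        rw [← mul_assoc, ← mul_assoc, ← hx]
      have h1 : leJo (fun u v : S => u * a * v) x₀ x := by
        rcases hx₀a with heq | ⟨c, rfl⟩ | ⟨c, rfl⟩ | ⟨c, d, rfl⟩
        · exact Or.inr (Or.inr (Or.inr ⟨a * x, x * a, by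
            rw [heq]; simp only [mul_assoc, hx4, hx3]⟩))
        · exact Or.inr (Or.inr (Or.inr ⟨c, x * a, by
            simp only [mul_assoc, hx4, hx3]⟩))
        · exact Or.inr (Or.inr (Or.inr ⟨a * x, c, by
            simp only [mul_assoc, hx4, hx3]⟩))
        · exact Or.inr (Or.inr (Or.inr ⟨c, d, by
            simp only [mul_assoc, hx4, hx3]⟩))
      have h2' := hmax x h1
      refine ⟨?_, Or.inr (Or.inr (Or.inr ⟨a, a, hx⟩))⟩
      rcases h2' with heq | ⟨p, hp⟩ | ⟨q, hq⟩ | ⟨p, q, hpq⟩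
      · rw [heq]; exact hx₀a
      · exact Or.inr (Or.inr (Or.inr ⟨p, x₀, hp⟩))
      · exact Or.inr (Or.inr (Or.inr ⟨x₀, q, hq⟩))
      · refine Or.inr (Or.inr (Or.inr ⟨p, x₀ * a * q, ?_⟩))
        simp only [mul_assoc] at hpq ⊢
        exact hpq
    · -- (2) → (1)
      intro h2
      obtain ⟨u, hu⟩ := ha
      refine ⟨u, (h2 u hu).1, ?_⟩
      intro y hy
      have haya : a = a * y * a := by
        rcases hy with heq | ⟨p, hp⟩ | ⟨q, hq⟩ | ⟨p, q, hpq⟩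
        · rw [← heq]; exact hu
        · refine eq_sandwich_of_leJ hstable hH (Or.inr (Or.inl ⟨a * p, ?_⟩))
          rw [hp] at hu
          simp only [mul_assoc] at hu ⊢
          exact hu
        · refine eq_sandwich_of_leJ hstable hH (Or.inr (Or.inr (Or.inl ⟨q * a, ?_⟩)))
          rw [hq] at hu
          simp only [mul_assoc] at hu ⊢
          exact hu
        · refine eq_sandwich_of_leJ hstable hH
            (Or.inr (Or.inr (Or.inr ⟨a * p, q * a, ?_⟩)))
          rw [hpq] at hu
          simp only [mul_assoc] at hu ⊢
          exact hu
      have hy' : y = y * a * y := post_of_pre_leJ hstable hH haya (h2 y haya).1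
      refine Or.inr (Or.inr (Or.inr ⟨y, y, ?_⟩))
      have h5 : a * (u * (a * y)) = a * y := by
        rw [← mul_assoc, ← mul_assoc, ← hu]
      simp only [mul_assoc]
      rw [h5, ← mul_assoc]
      exact hy'
  · constructor
    · intro h2 x hx
      exact post_of_pre_leJ hstable hH hx (h2 x hx).1
    · intro h3 x hx
      have hx' := h3 x hx
      exact ⟨Or.inr (Or.inr (Or.inr ⟨x, x, hx'⟩)),
        Or.inr (Or.inr (Or.inr ⟨a, a, hx⟩))⟩
end

section
/- Let S be a stable semigroup, let a ∈ S be regular, and let b ∈ V(a), i.e., a = a·b·a and b = b·a·b. Then: (1) the J^a-class of b in the variant S^a equals the D^a-class of b; (2) the set of idempotents of S^a lying in the J^a-class of b is exactly V(a), and V(a) is closed under ⋆_a and satisfies x ⋆_a y ⋆_a x = x for all x, y ∈ V(a) (so it is a rectangular band under ⋆_a); (3) the J^a-class of b is closed under ⋆_a and, with the operation ⋆_a, is a rectangular group. -/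
universe u

/-- Green's `D` relation relative to `op`. -/
def grDo {S : Type u} (op : S → S → S) (x y : S) : Prop := ∃ z, grRo op x z ∧ grLo op z y

/-- The variant `S^a`: the underlying set of `S` with operation `x ⋆_a y = x·a·y`. -/
def Variant (S : Type u) (a : S) : Type u := S

/-- Regard an element of `S` as an element of the variant `S^a`. -/
def Variant.of {S : Type u} (a : S) (x : S) : Variant S a := x

/-- Regard an element of the variant `S^a` as an element of `S`. -/
def Variant.val {S : Type u} {a : S} (x : Variant S a) : S := x

instance Variant.instMul {S : Type u} [Semigroup S] {a : S} : Mul (Variant S a) :=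
  ⟨fun x y => Variant.of a (x.val * a * y.val)⟩

instance Variant.instSemigroup {S : Type u} [Semigroup S] {a : S} :
    Semigroup (Variant S a) where
  mul_assoc x y z := by
    show Variant.of a (x.val * a * y.val * a * z.val)
        = Variant.of a (x.val * a * (y.val * a * z.val))
    exact congrArg (Variant.of a) (by simp [mul_assoc])

section Gen
variable {S : Type u} {op : S → S → S}

theorem leJo_refl (x : S) : leJo op x x := Or.inl rfl
theorem grRo_refl (x : S) : grRo op x x := ⟨Or.inl rfl, Or.inl rfl⟩
theorem grLo_refl (x : S) : grLo op x x := ⟨Or.inl rfl, Or.inl rfl⟩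
theorem grJo_refl (x : S) : grJo op x x := ⟨Or.inl rfl, Or.inl rfl⟩
theorem grRo_symm {x y : S} (h : grRo op x y) : grRo op y x := ⟨h.2, h.1⟩
theorem grLo_symm {x y : S} (h : grLo op x y) : grLo op y x := ⟨h.2, h.1⟩
theorem grJo_symm {x y : S} (h : grJo op x y) : grJo op y x := ⟨h.2, h.1⟩

theorem leJo_of_leRo {x y : S} (h : leRo op x y) : leJo op x y := by
  rcases h with h | ⟨c, h⟩
  · exact Or.inl h
  · exact Or.inr (Or.inr (Or.inl ⟨c, h⟩))

theorem leJo_of_leLo {x y : S} (h : leLo op x y) : leJo op x y := by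
  rcases h with h | ⟨c, h⟩
  · exact Or.inl h
  · exact Or.inr (Or.inl ⟨c, h⟩)

theorem grJo_of_grRo {x y : S} (h : grRo op x y) : grJo op x y :=
  ⟨leJo_of_leRo h.1, leJo_of_leRo h.2⟩

theorem grJo_of_grLo {x y : S} (h : grLo op x y) : grJo op x y :=
  ⟨leJo_of_leLo h.1, leJo_of_leLo h.2⟩

theorem leJo_op_left (hA : ∀ x y z : S, op (op x y) z = op x (op y z))
    (p : S) {y z : S} (h : leJo op y z) : leJo op (op p y) z := by
  rcases h with h | ⟨q, h⟩ | ⟨r, h⟩ | ⟨q, r, h⟩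
  · exact Or.inr (Or.inl ⟨p, by rw [h]⟩)
  · exact Or.inr (Or.inl ⟨op p q, by rw [h, hA]⟩)
  · exact Or.inr (Or.inr (Or.inr ⟨p, r, by rw [h, hA]⟩))
  · exact Or.inr (Or.inr (Or.inr ⟨op p q, r, by rw [h, ← hA, ← hA]⟩))

theorem leJo_op_right (hA : ∀ x y z : S, op (op x y) z = op x (op y z))
    (q : S) {y z : S} (h : leJo op y z) : leJo op (op y q) z := by
  rcases h with h | ⟨p, h⟩ | ⟨r, h⟩ | ⟨p, r, h⟩
  · exact Or.inr (Or.inr (Or.inl ⟨q, by rw [h]⟩))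
  · exact Or.inr (Or.inr (Or.inr ⟨p, q, by rw [h]⟩))
  · exact Or.inr (Or.inr (Or.inl ⟨op r q, by rw [h, hA]⟩))
  · exact Or.inr (Or.inr (Or.inr ⟨p, op r q, by rw [h, hA]⟩))

theorem leJo_trans (hA : ∀ x y z : S, op (op x y) z = op x (op y z))
    {x y z : S} (hxy : leJo op x y) (hyz : leJo op y z) : leJo op x z := by
  rcases hxy with h | ⟨p, h⟩ | ⟨q, h⟩ | ⟨p, q, h⟩
  · rwa [h]
  · rw [h]; exact leJo_op_left hA p hyz
  · rw [h]; exact leJo_op_right hA q hyz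
  · rw [h]; exact leJo_op_right hA q (leJo_op_left hA p hyz)

theorem grJo_trans (hA : ∀ x y z : S, op (op x y) z = op x (op y z))
    {x y z : S} (hxy : grJo op x y) (hyz : grJo op y z) : grJo op x z :=
  ⟨leJo_trans hA hxy.1 hyz.1, leJo_trans hA hyz.2 hxy.2⟩

theorem idem_right_id (hA : ∀ x y z : S, op (op x y) z = op x (op y z))
    {e : S} (he : op e e = e) {x : S} (h : leLo op x e) : op x e = x := by
  rcases h with h | ⟨p, h⟩
  · rw [h, he]
  · rw [h, hA, he]

theorem idem_left_id (hA : ∀ x y z : S, op (op x y) z = op x (op y z))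
    {e : S} (he : op e e = e) {x : S} (h : leRo op x e) : op e x = x := by
  rcases h with h | ⟨c, h⟩
  · rw [h, he]
  · rw [h, ← hA, he]

theorem idem_unique (hA : ∀ x y z : S, op (op x y) z = op x (op y z))
    {e f : S} (he : op e e = e) (hf : op f f = f)
    (h1 : leLo op e f) (h2 : leRo op f e) : e = f := by
  have h3 : op e f = e := idem_right_id hA hf h1
  have h4 : op e f = f := idem_left_id hA he h2
  rw [← h3, h4]

theorem mc_lemma (hA : ∀ x y z : S, op (op x y) z = op x (op y z))
    {e x y : S} (he : op e e = e) (hx : grLo op x e) (hy : grRo op y e) :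
    grRo op (op x y) x ∧ grLo op (op x y) y := by
  have hxe : op x e = x := idem_right_id hA he hx.1
  have hey : op e y = y := idem_left_id hA he hy.1
  constructor
  · refine ⟨Or.inr ⟨y, rfl⟩, ?_⟩
    rcases hy.2 with h | ⟨v, h⟩
    · exact Or.inl (by conv_lhs => rw [← hxe, h])
    · refine Or.inr ⟨v, ?_⟩
      calc x = op x e := hxe.symm
        _ = op x (op y v) := by rw [← h]
        _ = op (op x y) v := (hA x y v).symm
  · refine ⟨Or.inr ⟨x, rfl⟩, ?_⟩
    rcases hx.2 with h | ⟨u, h⟩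
    · exact Or.inl (by conv_lhs => rw [← hey, h])
    · refine Or.inr ⟨u, ?_⟩
      calc y = op e y := hey.symm
        _ = op (op u x) y := by rw [← h]
        _ = op u (op x y) := hA u x y

theorem reg_spread_R (hA : ∀ x y z : S, op (op x y) z = op x (op y z))
    {z x : S} (hz : ∃ w, z = op (op z w) z) (h : grRo op x z) :
    ∃ w, x = op (op x w) x := by
  obtain ⟨w, hw⟩ := hz
  rcases h.1 with h1 | ⟨c, h1⟩
  · exact ⟨w, by rw [h1]; exact hw⟩
  · rcases h.2 with h2 | ⟨d, h2⟩
    · exact ⟨w, h2 ▸ hw⟩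
    · refine ⟨op d w, ?_⟩
      calc x = op z c := h1
        _ = op (op (op z w) z) c := by conv_lhs => rw [hw]
        _ = op (op z w) (op z c) := hA _ _ _
        _ = op (op z w) x := by rw [← h1]
        _ = op (op (op x d) w) x := by rw [← h2]
        _ = op (op x (op d w)) x := by rw [hA x d w]

theorem reg_spread_L (hA : ∀ x y z : S, op (op x y) z = op x (op y z))
    {z x : S} (hz : ∃ w, z = op (op z w) z) (h : grLo op x z) :
    ∃ w, x = op (op x w) x := by
  obtain ⟨w, hw⟩ := hz
  have hw' : z = op z (op w z) := hw.trans (hA z w z)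
  rcases h.1 with h1 | ⟨c, h1⟩
  · exact ⟨w, by rw [h1]; exact hw⟩
  · rcases h.2 with h2 | ⟨d, h2⟩
    · exact ⟨w, h2 ▸ hw⟩
    · refine ⟨op w d, ?_⟩
      calc x = op c z := h1
        _ = op c (op z (op w z)) := by conv_lhs => rw [hw']
        _ = op (op c z) (op w z) := (hA _ _ _).symm
        _ = op x (op w z) := by rw [← h1]
        _ = op x (op w (op d x)) := by rw [← h2]
        _ = op x (op (op w d) x) := by rw [hA w d x]
        _ = op (op x (op w d)) x := (hA x (op w d) x).symm

theorem leRo_trans (hA : ∀ x y z : S, op (op x y) z = op x (op y z))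
    {x y z : S} (hxy : leRo op x y) (hyz : leRo op y z) : leRo op x z := by
  rcases hxy with h | ⟨c, h⟩
  · rwa [h]
  · rcases hyz with h2 | ⟨d, h2⟩
    · rw [h2] at h; exact Or.inr ⟨c, h⟩
    · exact Or.inr ⟨op d c, by rw [h, h2, hA]⟩

theorem leLo_trans (hA : ∀ x y z : S, op (op x y) z = op x (op y z))
    {x y z : S} (hxy : leLo op x y) (hyz : leLo op y z) : leLo op x z := by
  rcases hxy with h | ⟨c, h⟩
  · rwa [h]
  · rcases hyz with h2 | ⟨d, h2⟩
    · rw [h2] at h; exact Or.inr ⟨c, h⟩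
    · exact Or.inr ⟨op c d, by rw [h, h2, hA]⟩

theorem grRo_trans (hA : ∀ x y z : S, op (op x y) z = op x (op y z))
    {x y z : S} (hxy : grRo op x y) (hyz : grRo op y z) : grRo op x z :=
  ⟨leRo_trans hA hxy.1 hyz.1, leRo_trans hA hyz.2 hxy.2⟩

theorem grLo_trans (hA : ∀ x y z : S, op (op x y) z = op x (op y z))
    {x y z : S} (hxy : grLo op x y) (hyz : grLo op y z) : grLo op x z :=
  ⟨leLo_trans hA hxy.1 hyz.1, leLo_trans hA hyz.2 hxy.2⟩

theorem stable_J_to_D (hA : ∀ x y z : S, op (op x y) z = op x (op y z))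
    (hs : StableOp op) {x y : S} (h : grJo op x y) : grDo op x y := by
  rcases h.1 with h1 | ⟨p, h1⟩ | ⟨q, h1⟩ | ⟨p, q, h1⟩
  · exact ⟨y, by rw [h1]; exact grRo_refl y, grLo_refl y⟩
  · refine ⟨x, grRo_refl x, ?_⟩
    have hj : grJo op y (op p y) := by
      refine ⟨?_, Or.inr (Or.inl ⟨p, rfl⟩)⟩
      rw [← h1]; exact h.2
    have := (hs y p).2 hj
    rw [← h1] at this
    exact grLo_symm this
  · refine ⟨y, ?_, grLo_refl y⟩
    have hj : grJo op y (op y q) := by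
      refine ⟨?_, Or.inr (Or.inr (Or.inl ⟨q, rfl⟩))⟩
      rw [← h1]; exact h.2
    have := (hs y q).1 hj
    rw [← h1] at this
    exact grRo_symm this
  · refine ⟨op p y, ?_, ?_⟩
    · have hj : grJo op (op p y) (op (op p y) q) := by
        refine ⟨?_, Or.inr (Or.inr (Or.inl ⟨q, rfl⟩))⟩
        rw [← h1]
        exact leJo_trans hA (leJo_op_left hA p (leJo_refl y)) h.2
      have := (hs (op p y) q).1 hj
      rw [← h1] at this
      exact grRo_symm this
    · have hj : grJo op y (op p y) := by
        refine ⟨?_, Or.inr (Or.inl ⟨p, rfl⟩)⟩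
        refine leJo_trans hA h.2 ?_
        rw [h1]; exact Or.inr (Or.inr (Or.inl ⟨q, rfl⟩))
      have := (hs y p).2 hj
      exact grLo_symm this

theorem D_to_J (hA : ∀ x y z : S, op (op x y) z = op x (op y z))
    {x y : S} (h : grDo op x y) : grJo op x y := by
  obtain ⟨z, hR, hL⟩ := h
  exact grJo_trans hA (grJo_of_grRo hR) (grJo_of_grLo hL)

end Gen

set_option linter.unusedSectionVars false
section Var
variable {S : Type u} [Semigroup S]

abbrev mulA (a : S) : S → S → S := fun u v => u * a * v

theorem hA_var (a : S) : ∀ x y z : S, mulA a (mulA a x y) z = mulA a x (mulA a y z) := by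
  intro x y z; show x*a*y*a*z = x*a*(y*a*z); simp only [mul_assoc]

theorem stable_var (hs : StableOp (fun u v : S => u * v)) (a : S) : StableOp (mulA a) := by
  intro x u
  constructor
  · intro hj
    have hJ : grJo (fun u v : S => u * v) x (x * (a*u*a)) := by
      constructor
      · rcases hj.1 with h | ⟨p, h⟩ | ⟨q, h⟩ | ⟨p, q, h⟩
        · refine Or.inr (Or.inr (Or.inl ⟨u, ?_⟩))
          calc x = x*a*u := h
            _ = (x*a*u)*a*u := by conv_lhs => rw [h]
            _ = x*(a*u*a)*u := by simp only [mul_assoc]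
        · refine Or.inr (Or.inr (Or.inr ⟨p*a*p*a, u, ?_⟩))
          calc x = p*a*(x*a*u) := h
            _ = p*a*((p*a*(x*a*u))*a*u) := by conv_lhs => rw [h]
            _ = (p*a*p*a*(x*(a*u*a)))*u := by simp only [mul_assoc]
        · refine Or.inr (Or.inr (Or.inl ⟨q, ?_⟩))
          calc x = (x*a*u)*a*q := h
            _ = x*(a*u*a)*q := by simp only [mul_assoc]
        · refine Or.inr (Or.inr (Or.inr ⟨p*a, q, ?_⟩))
          calc x = (p*a*(x*a*u))*a*q := h
            _ = (p*a*(x*(a*u*a)))*q := by simp only [mul_assoc]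
      · exact Or.inr (Or.inr (Or.inl ⟨a*u*a, rfl⟩))
    have hr := (hs x (a*u*a)).1 hJ
    constructor
    · rcases hr.1 with h | ⟨c, h⟩
      · refine Or.inr ⟨a*u*a, ?_⟩
        show x = (x*a*u)*a*(a*u*a)
        calc x = x*(a*u*a) := h
          _ = (x*(a*u*a))*(a*u*a) := by conv_lhs => rw [h]
          _ = (x*a*u)*a*(a*u*a) := by simp only [mul_assoc]
      · refine Or.inr ⟨c, ?_⟩
        show x = (x*a*u)*a*c
        calc x = x*(a*u*a)*c := h
          _ = (x*a*u)*a*c := by simp only [mul_assoc]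
    · exact Or.inr ⟨u, rfl⟩
  · intro hj
    have hJ : grJo (fun u v : S => u * v) x ((a*u*a) * x) := by
      constructor
      · rcases hj.1 with h | ⟨p, h⟩ | ⟨q, h⟩ | ⟨p, q, h⟩
        · refine Or.inr (Or.inl ⟨u, ?_⟩)
          calc x = u*a*x := h
            _ = u*a*(u*a*x) := by conv_lhs => rw [h]
            _ = u*((a*u*a)*x) := by simp only [mul_assoc]
        · refine Or.inr (Or.inl ⟨p, ?_⟩)
          calc x = p*a*(u*a*x) := h
            _ = p*((a*u*a)*x) := by simp only [mul_assoc]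
        · refine Or.inr (Or.inr (Or.inr ⟨u, a*q*a*q, ?_⟩))
          calc x = (u*a*x)*a*q := h
            _ = (u*a*((u*a*x)*a*q))*a*q := by conv_lhs => rw [h]
            _ = (u*((a*u*a)*x))*(a*q*a*q) := by simp only [mul_assoc]
        · refine Or.inr (Or.inr (Or.inr ⟨p, a*q, ?_⟩))
          calc x = (p*a*(u*a*x))*a*q := h
            _ = (p*((a*u*a)*x))*(a*q) := by simp only [mul_assoc]
      · exact Or.inr (Or.inl ⟨a*u*a, rfl⟩)
    have hl := (hs x (a*u*a)).2 hJ
    constructor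
    · rcases hl.1 with h | ⟨c, h⟩
      · refine Or.inr ⟨a*u*a, ?_⟩
        show x = (a*u*a)*a*(u*a*x)
        calc x = (a*u*a)*x := h
          _ = (a*u*a)*((a*u*a)*x) := by conv_lhs => rw [h]
          _ = (a*u*a)*a*(u*a*x) := by simp only [mul_assoc]
      · refine Or.inr ⟨c, ?_⟩
        show x = c*a*(u*a*x)
        calc x = c*((a*u*a)*x) := h
          _ = c*a*(u*a*x) := by simp only [mul_assoc]
    · exact Or.inr ⟨u, rfl⟩

section Core
variable (hs : StableOp (fun u v : S => u * v)) {a b : S}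
  (hab : a = a * b * a) (hba : b = b * a * b)
include hs hab hba

/-- V(a) elements are in the J^a class of b -/
theorem V_in_class {x : S} (hx1 : a = a * x * a) (hx2 : x = x * a * x) :
    grJo (mulA a) b x := by
  constructor
  · refine Or.inr (Or.inr (Or.inr ⟨b, b, ?_⟩))
    show b = (b*a*x)*a*b
    calc b = b*a*b := hba
      _ = b*(a*x*a)*b := by rw [← hx1]
      _ = (b*a*x)*a*b := by simp only [mul_assoc]
  · refine Or.inr (Or.inr (Or.inr ⟨x, x, ?_⟩))
    show x = (x*a*b)*a*x
    calc x = x*a*x := hx2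
      _ = x*(a*b*a)*x := by rw [← hab]
      _ = (x*a*b)*a*x := by simp only [mul_assoc]

/-- From `b ≤_J^a x` we get the two stability conditions in `S`. -/
theorem stab_conds {x : S} (hbx : leJo (mulA a) b x) :
    leRo (fun u v : S => u * v) a (a*x) ∧ leLo (fun u v : S => u * v) a (x*a) := by
  have h2 : leJo (fun u v : S => u * v) (a*x) a := Or.inr (Or.inr (Or.inl ⟨x, rfl⟩))
  have h2' : leJo (fun u v : S => u * v) (x*a) a := Or.inr (Or.inl ⟨x, rfl⟩)
  have h1 : leJo (fun u v : S => u * v) a (a*x) := by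
    rcases hbx with h | ⟨p, h⟩ | ⟨q, h⟩ | ⟨p, q, h⟩
    · refine Or.inr (Or.inr (Or.inl ⟨a, ?_⟩))
      show a = (a*x)*a
      rw [← h]; exact hab
    · have h' : b = p*a*x := h
      refine Or.inr (Or.inr (Or.inr ⟨a*p, a, ?_⟩))
      show a = (a*p*(a*x))*a
      calc a = a*b*a := hab
        _ = a*(p*a*x)*a := by rw [← h']
        _ = (a*p*(a*x))*a := by simp only [mul_assoc]
    · have h' : b = x*a*q := h
      refine Or.inr (Or.inr (Or.inl ⟨a*q*a, ?_⟩))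
      show a = (a*x)*(a*q*a)
      calc a = a*b*a := hab
        _ = a*(x*a*q)*a := by rw [← h']
        _ = (a*x)*(a*q*a) := by simp only [mul_assoc]
    · have h' : b = (p*a*x)*a*q := h
      refine Or.inr (Or.inr (Or.inr ⟨a*p, a*q*a, ?_⟩))
      show a = (a*p*(a*x))*(a*q*a)
      calc a = a*b*a := hab
        _ = a*((p*a*x)*a*q)*a := by rw [← h']
        _ = (a*p*(a*x))*(a*q*a) := by simp only [mul_assoc]
  have h1' : leJo (fun u v : S => u * v) a (x*a) := by
    rcases hbx with h | ⟨p, h⟩ | ⟨q, h⟩ | ⟨p, q, h⟩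
    · refine Or.inr (Or.inl ⟨a, ?_⟩)
      show a = a*(x*a)
      calc a = a*b*a := hab
        _ = a*(x*a) := by rw [← h, mul_assoc]
    · have h' : b = p*a*x := h
      refine Or.inr (Or.inl ⟨a*p*a, ?_⟩)
      show a = (a*p*a)*(x*a)
      calc a = a*b*a := hab
        _ = a*(p*a*x)*a := by rw [← h']
        _ = (a*p*a)*(x*a) := by simp only [mul_assoc]
    · have h' : b = x*a*q := h
      refine Or.inr (Or.inr (Or.inr ⟨a, q*a, ?_⟩))
      show a = (a*(x*a))*(q*a)
      calc a = a*b*a := hab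
        _ = a*(x*a*q)*a := by rw [← h']
        _ = (a*(x*a))*(q*a) := by simp only [mul_assoc]
    · have h' : b = (p*a*x)*a*q := h
      refine Or.inr (Or.inr (Or.inr ⟨a*p*a, q*a, ?_⟩))
      show a = ((a*p*a)*(x*a))*(q*a)
      calc a = a*b*a := hab
        _ = a*((p*a*x)*a*q)*a := by rw [← h']
        _ = ((a*p*a)*(x*a))*(q*a) := by simp only [mul_assoc]
  exact ⟨((hs a x).1 ⟨h1, h2⟩).1, ((hs a x).2 ⟨h1', h2'⟩).1⟩

/-- idempotents of the variant in the class of b are in V(a) -/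
theorem idem_in_V {x : S} (hbx : leJo (mulA a) b x) (hx : x = x*a*x) :
    a = a*x*a := by
  obtain ⟨hr, hl⟩ := stab_conds hs hab hba hbx
  rcases hl with hl | ⟨d, hl⟩
  · -- a = x*a
    have haa : a = a*a := by
      rcases hr with hr | ⟨c, hr⟩
      · calc a = a*x := hr
          _ = a*(x*a*x) := by rw [← hx]
          _ = (a*x)*(a*x) := by simp only [mul_assoc]
          _ = a*a := by rw [← hr]
      · replace hr : a = (a*x)*c := hr
        calc a = (a*x)*c := hr
          _ = (a*(x*a*x))*c := by rw [← hx]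
          _ = a*((x*a)*(x*c)) := by simp only [mul_assoc]
          _ = a*(a*(x*c)) := by rw [← hl]
          _ = a*((a*x)*c) := by simp only [mul_assoc]
          _ = a*a := by rw [← hr]
    calc a = a*a := haa
      _ = a*(x*a) := by rw [← hl]
      _ = a*x*a := by rw [mul_assoc]
  · -- a = d*(x*a)
    replace hl : a = d*(x*a) := hl
    calc a = d*(x*a) := hl
      _ = d*((x*a*x)*a) := by rw [← hx]
      _ = (d*(x*a))*(x*a) := by simp only [mul_assoc]
      _ = a*(x*a) := by rw [← hl]
      _ = a*x*a := by rw [mul_assoc]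

/-- V(a) is closed under the variant product -/
theorem V_closed {x y : S} (hx : a = a * x * a ∧ x = x * a * x)
    (hy : a = a * y * a ∧ y = y * a * y) :
    a = a * (x * a * y) * a ∧ (x * a * y) = (x * a * y) * a * (x * a * y) := by
  constructor
  · calc a = a*y*a := hy.1
      _ = (a*x*a)*y*a := by rw [← hx.1]
      _ = a*(x*a*y)*a := by simp only [mul_assoc]
  · have : (x*a*y)*a*(x*a*y) = x*a*y := by
      calc (x*a*y)*a*(x*a*y) = x*((a*y*a)*(x*a*y)) := by simp only [mul_assoc]
        _ = x*(a*(x*a*y)) := by rw [← hy.1]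
        _ = (x*a*x)*(a*y) := by simp only [mul_assoc]
        _ = x*(a*y) := by rw [← hx.2]
        _ = x*a*y := by rw [mul_assoc]
    exact this.symm

theorem V_band {x y : S} (hx : a = a * x * a ∧ x = x * a * x)
    (hy : a = a * y * a ∧ y = y * a * y) : x * a * y * a * x = x := by
  calc x*a*y*a*x = x*((a*y*a)*x) := by simp only [mul_assoc]
    _ = x*(a*x) := by rw [← hy.1]
    _ = x*a*x := by rw [mul_assoc]
    _ = x := hx.2.symm

end Core
end Var

section Core2
variable {S : Type u} [Semigroup S] (hs : StableOp (fun u v : S => u * v)) {a b : S}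
  (hab : a = a * b * a) (hba : b = b * a * b)
include hs hab hba

set_option maxHeartbeats 1000000 in
theorem reg_of_class {x : S} (hx : grJo (mulA a) b x) : ∃ w, x = (x*a*w)*a*x := by
  have hA := hA_var (S := S) a
  have hsA := stable_var hs a
  have hbreg : ∃ w, b = mulA a (mulA a b w) b :=
    ⟨b, by show b = (b*a*b)*a*b; rw [← hba, ← hba]⟩
  obtain ⟨z, hR, hL⟩ := stable_J_to_D hA hsA hx
  have hzreg := reg_spread_R hA hbreg (grRo_symm hR)
  exact reg_spread_L hA hzreg (grLo_symm hL)

theorem class_closed {x y : S} (hx : grJo (mulA a) b x) (hy : grJo (mulA a) b y) :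
    grJo (mulA a) b (x*a*y) := by
  have hA := hA_var (S := S) a
  obtain ⟨w, hw⟩ := reg_of_class hs hab hba hx
  obtain ⟨v, hv⟩ := reg_of_class hs hab hba hy
  have hf1i : (w*a*x)*a*(w*a*x) = w*a*x := by
    calc (w*a*x)*a*(w*a*x) = w*a*((x*a*w)*a*x) := by simp only [mul_assoc]
      _ = w*a*x := by rw [← hw]
  have he2i : (y*a*v)*a*(y*a*v) = y*a*v := by
    calc (y*a*v)*a*(y*a*v) = ((y*a*v)*a*y)*a*v := by simp only [mul_assoc]
      _ = y*a*v := by rw [← hv]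
  have hKf1 : grJo (mulA a) b (w*a*x) := by
    refine grJo_trans hA hx ⟨Or.inr (Or.inl ⟨x, ?_⟩), Or.inr (Or.inl ⟨w, rfl⟩)⟩
    show x = x*a*(w*a*x)
    calc x = (x*a*w)*a*x := hw
      _ = x*a*(w*a*x) := by simp only [mul_assoc]
  have hKe2 : grJo (mulA a) b (y*a*v) := by
    refine grJo_trans hA hy ⟨Or.inr (Or.inr (Or.inl ⟨y, ?_⟩)), Or.inr (Or.inr (Or.inl ⟨v, rfl⟩))⟩
    show y = (y*a*v)*a*y
    exact hv
  have hf1V : a = a*(w*a*x)*a := idem_in_V hs hab hba hKf1.1 hf1i.symm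
  have he2V : a = a*(y*a*v)*a := idem_in_V hs hab hba hKe2.1 he2i.symm
  have band : (w*a*x)*a*(y*a*v)*a*(w*a*x) = w*a*x :=
    V_band hs hab hba ⟨hf1V, hf1i.symm⟩ ⟨he2V, he2i.symm⟩
  constructor
  · refine leJo_trans hA hKf1.1 (Or.inr (Or.inr (Or.inr ⟨w, v*a*(w*a*x), ?_⟩)))
    show w*a*x = (w*a*(x*a*y))*a*(v*a*(w*a*x))
    calc w*a*x = (w*a*x)*a*(y*a*v)*a*(w*a*x) := band.symm
      _ = (w*a*(x*a*y))*a*(v*a*(w*a*x)) := by simp only [mul_assoc]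
  · exact leJo_trans hA (Or.inr (Or.inr (Or.inl ⟨y, rfl⟩))) hx.2

/-- the structural decomposition of an element of the class -/
theorem class_struct {x : S} (hx : grJo (mulA a) b x) :
    ∃ e f : S, (e*a*e = e ∧ grLo (mulA a) e b) ∧ (f*a*f = f ∧ grRo (mulA a) f b) ∧
      (grRo (mulA a) (b*a*x*a*b) b ∧ grLo (mulA a) (b*a*x*a*b) b) ∧
      (e*a*x = x) ∧ (x*a*f = x) ∧
      (e*a*(b*a*x*a*b) = x*a*b) ∧ ((b*a*x*a*b)*a*f = b*a*x) := by
  have hA := hA_var (S := S) a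
  have hbi : b*a*b = b := hba.symm
  obtain ⟨w, hw⟩ := reg_of_class hs hab hba hx
  -- e0 := x*a*w, f0 := w*a*x
  have he0i : (x*a*w)*a*(x*a*w) = x*a*w := by
    calc (x*a*w)*a*(x*a*w) = ((x*a*w)*a*x)*a*w := by simp only [mul_assoc]
      _ = x*a*w := by rw [← hw]
  have hf0i : (w*a*x)*a*(w*a*x) = w*a*x := by
    calc (w*a*x)*a*(w*a*x) = w*a*((x*a*w)*a*x) := by simp only [mul_assoc]
      _ = w*a*x := by rw [← hw]
  have hKe0 : grJo (mulA a) b (x*a*w) := by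
    refine grJo_trans hA hx ⟨Or.inr (Or.inr (Or.inl ⟨x, hw⟩)), Or.inr (Or.inr (Or.inl ⟨w, rfl⟩))⟩
  have hKf0 : grJo (mulA a) b (w*a*x) := by
    refine grJo_trans hA hx ⟨Or.inr (Or.inl ⟨x, ?_⟩), Or.inr (Or.inl ⟨w, rfl⟩)⟩
    show x = x*a*(w*a*x)
    calc x = (x*a*w)*a*x := hw
      _ = x*a*(w*a*x) := by simp only [mul_assoc]
  have he0V : a = a*(x*a*w)*a := idem_in_V hs hab hba hKe0.1 he0i.symm
  have hf0V : a = a*(w*a*x)*a := idem_in_V hs hab hba hKf0.1 hf0i.symm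
  have hbV : a = a*b*a ∧ b = b*a*b := ⟨hab, hba⟩
  have he0p : a = a*(x*a*w)*a ∧ (x*a*w) = (x*a*w)*a*(x*a*w) := ⟨he0V, he0i.symm⟩
  have hf0p : a = a*(w*a*x)*a ∧ (w*a*x) = (w*a*x)*a*(w*a*x) := ⟨hf0V, hf0i.symm⟩
  -- e := (x*a*w)*a*b, f := b*a*(w*a*x)
  obtain ⟨heV, heid⟩ := V_closed hs hab hba he0p hbV
  obtain ⟨hfV, hfid⟩ := V_closed hs hab hba hbV hf0p
  have hei : ((x*a*w)*a*b)*a*((x*a*w)*a*b) = (x*a*w)*a*b := heid.symm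
  have hfi : (b*a*(w*a*x))*a*(b*a*(w*a*x)) = b*a*(w*a*x) := hfid.symm
  have hbe0b : b*a*(x*a*w)*a*b = b := V_band hs hab hba hbV he0p
  have hbf0b : b*a*(w*a*x)*a*b = b := V_band hs hab hba hbV hf0p
  have he0be0 : (x*a*w)*a*b*a*(x*a*w) = x*a*w := V_band hs hab hba he0p hbV
  have hf0bf0 : (w*a*x)*a*b*a*(w*a*x) = w*a*x := V_band hs hab hba hf0p hbV
  -- grLo e b
  have heLb : grLo (mulA a) ((x*a*w)*a*b) b := by
    constructor
    · exact Or.inr ⟨x*a*w, rfl⟩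
    · refine Or.inr ⟨b, ?_⟩
      show b = b*a*((x*a*w)*a*b)
      calc b = b*a*(x*a*w)*a*b := hbe0b.symm
        _ = b*a*((x*a*w)*a*b) := by simp only [mul_assoc]
  -- grRo f b
  have hfRb : grRo (mulA a) (b*a*(w*a*x)) b := by
    constructor
    · exact Or.inr ⟨w*a*x, rfl⟩
    · refine Or.inr ⟨b, ?_⟩
      show b = (b*a*(w*a*x))*a*b
      calc b = b*a*(w*a*x)*a*b := hbf0b.symm
        _ = (b*a*(w*a*x))*a*b := by simp only [mul_assoc]
  -- leRo x e and e*a*x = x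
  have hxRe : leRo (mulA a) x ((x*a*w)*a*b) := by
    refine leRo_trans hA (Or.inr ⟨x, hw⟩) (Or.inr ⟨x*a*w, ?_⟩)
    show x*a*w = ((x*a*w)*a*b)*a*(x*a*w)
    calc x*a*w = (x*a*w)*a*b*a*(x*a*w) := he0be0.symm
      _ = ((x*a*w)*a*b)*a*(x*a*w) := by simp only [mul_assoc]
  have hex : ((x*a*w)*a*b)*a*x = x := idem_left_id hA hei hxRe
  -- leLo x f and x*a*f = x
  have hxLf0 : leLo (mulA a) x (w*a*x) := by
    refine Or.inr ⟨x, ?_⟩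
    show x = x*a*(w*a*x)
    calc x = (x*a*w)*a*x := hw
      _ = x*a*(w*a*x) := by simp only [mul_assoc]
  have hf0Lf : leLo (mulA a) (w*a*x) (b*a*(w*a*x)) := by
    refine Or.inr ⟨w*a*x, ?_⟩
    show w*a*x = (w*a*x)*a*(b*a*(w*a*x))
    calc w*a*x = (w*a*x)*a*b*a*(w*a*x) := hf0bf0.symm
      _ = (w*a*x)*a*(b*a*(w*a*x)) := by simp only [mul_assoc]
  have hxLf : leLo (mulA a) x (b*a*(w*a*x)) := leLo_trans hA hxLf0 hf0Lf
  have hxf : x*a*(b*a*(w*a*x)) = x := idem_right_id hA hfi hxLf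
  -- step 1 : b*a*x is R b and L x
  have heRx : leRo (mulA a) ((x*a*w)*a*b) x := by
    refine Or.inr ⟨w*a*b, ?_⟩
    show (x*a*w)*a*b = x*a*(w*a*b)
    simp only [mul_assoc]
  have step1 := mc_lemma hA hei (grLo_symm heLb) ⟨hxRe, heRx⟩
  -- step1 : grRo (b*a*x) b ∧ grLo (b*a*x) x
  have hbxLx : leLo (mulA a) (b*a*x) x := Or.inr ⟨b, rfl⟩
  have hfLf0 : leLo (mulA a) (b*a*(w*a*x)) (w*a*x) := Or.inr ⟨b, rfl⟩
  have hf0Lx : leLo (mulA a) (w*a*x) x := Or.inr ⟨w, rfl⟩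
  have hx2 : grLo (mulA a) (b*a*x) (b*a*(w*a*x)) := by
    constructor
    · exact leLo_trans hA hbxLx hxLf
    · exact leLo_trans hA (leLo_trans hA hfLf0 hf0Lx) step1.2.2
  have step2 := mc_lemma hA hfi hx2 (grRo_symm hfRb)
  -- step2 : grRo ((b*a*x)*a*b) (b*a*x) ∧ grLo ((b*a*x)*a*b) b
  have heg : ((x*a*w)*a*b)*a*(b*a*x*a*b) = x*a*b := by
    calc ((x*a*w)*a*b)*a*(b*a*x*a*b) = (x*a*w)*a*((b*a*b)*a*(x*a*b)) := by
          simp only [mul_assoc]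
      _ = (x*a*w)*a*(b*a*(x*a*b)) := by rw [hbi]
      _ = (((x*a*w)*a*b)*a*x)*a*b := by simp only [mul_assoc]
      _ = x*a*b := by rw [hex]
  have hg0f : (b*a*x*a*b)*a*(b*a*(w*a*x)) = b*a*x := by
    calc (b*a*x*a*b)*a*(b*a*(w*a*x)) = (b*a*x)*a*((b*a*b)*a*(w*a*x)) := by
          simp only [mul_assoc]
      _ = (b*a*x)*a*(b*a*(w*a*x)) := by rw [hbi]
      _ = b*a*(x*a*(b*a*(w*a*x))) := by simp only [mul_assoc]
      _ = b*a*x := by rw [hxf]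
  exact ⟨(x*a*w)*a*b, b*a*(w*a*x), ⟨hei, heLb⟩, ⟨hfi, hfRb⟩,
    ⟨grRo_trans hA step2.1 step1.1, step2.2⟩, hex, hxf, heg, hg0f⟩

end Core2

section Core3
variable {S : Type u} [Semigroup S] {a b : S}

theorem UU_mul {e f : S} (hfi : f*a*f = f) (heL : grLo (mulA a) e b)
    (hfL : grLo (mulA a) f b) : e*a*f = e :=
  idem_right_id (hA_var a) hfi (leLo_trans (hA_var a) heL.1 hfL.2)

theorem VV_mul {f g : S} (hfi : f*a*f = f) (hfR : grRo (mulA a) f b)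
    (hgR : grRo (mulA a) g b) : f*a*g = g :=
  idem_left_id (hA_var a) hfi (leRo_trans (hA_var a) hgR.1 hfR.2)

variable (hs : StableOp (fun u v : S => u * v)) (hab : a = a * b * a) (hba : b = b * a * b)
include hs hab hba

theorem VU_mul {f e : S} (hfi : f*a*f = f) (hfR : grRo (mulA a) f b)
    (hei : e*a*e = e) (heL : grLo (mulA a) e b) : f*a*e = b := by
  have hA := hA_var (S := S) a
  have hKf : grJo (mulA a) b f := grJo_symm (grJo_of_grRo hfR)
  have hKe : grJo (mulA a) b e := grJo_symm (grJo_of_grLo heL)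
  have hfV : a = a*f*a := idem_in_V hs hab hba hKf.1 hfi.symm
  have heV : a = a*e*a := idem_in_V hs hab hba hKe.1 hei.symm
  obtain ⟨hfeV, hfeid⟩ := V_closed hs hab hba ⟨hfV, hfi.symm⟩ ⟨heV, hei.symm⟩
  have hfef : f*a*e*a*f = f := V_band hs hab hba ⟨hfV, hfi.symm⟩ ⟨heV, hei.symm⟩
  refine idem_unique hA hfeid.symm hba.symm ?_ ?_
  · exact leLo_trans hA (Or.inr ⟨f, rfl⟩) heL.1
  · exact leRo_trans hA hfR.2 (Or.inr ⟨f, hfef.symm⟩)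

theorem Hb_mul {g h : S} (hg : grRo (mulA a) g b ∧ grLo (mulA a) g b)
    (hh : grRo (mulA a) h b ∧ grLo (mulA a) h b) :
    grRo (mulA a) (g*a*h) b ∧ grLo (mulA a) (g*a*h) b := by
  have hA := hA_var (S := S) a
  have hmc := mc_lemma hA (show mulA a b b = b from hba.symm) hg.2 hh.1
  exact ⟨grRo_trans hA hmc.1 hg.1, grLo_trans hA hmc.2 hh.2⟩

theorem Hb_rinv {g : S} (hg : grRo (mulA a) g b ∧ grLo (mulA a) g b) :
    ∃ h, (grRo (mulA a) h b ∧ grLo (mulA a) h b) ∧ g*a*h = b := by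
  have hA := hA_var (S := S) a
  have hsA := stable_var hs a
  have hgb : g*a*b = g := idem_right_id hA (show mulA a b b = b from hba.symm) hg.2.1
  rcases hg.1.2 with h0 | ⟨s, h0⟩
  · refine ⟨b, ⟨grRo_refl b, grLo_refl b⟩, ?_⟩
    rw [← h0]; exact hba.symm
  · replace h0 : b = g*a*s := h0
    have ghb : g*a*(b*a*s*a*b) = b := by
      calc g*a*(b*a*s*a*b) = ((g*a*b)*a*s)*a*b := by simp only [mul_assoc]
        _ = (g*a*s)*a*b := by rw [hgb]
        _ = b*a*b := by rw [← h0]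
        _ = b := hba.symm
    have hJ : grJo (mulA a) b (b*a*s*a*b) :=
      ⟨Or.inr (Or.inl ⟨g, ghb.symm⟩), Or.inr (Or.inl ⟨b*a*s, rfl⟩)⟩
    have hEq : mulA a b (s*a*b) = b*a*s*a*b := by
      show b*a*(s*a*b) = b*a*s*a*b; simp only [mul_assoc]
    have hR := (hsA b (s*a*b)).1 (by rw [hEq]; exact hJ)
    rw [hEq] at hR
    have hL := (hsA b (b*a*s)).2 hJ
    exact ⟨b*a*s*a*b, ⟨grRo_symm hR, grLo_symm hL⟩, ghb⟩

theorem Hb_inv {g : S} (hg : grRo (mulA a) g b ∧ grLo (mulA a) g b) :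
    ∃ h, (grRo (mulA a) h b ∧ grLo (mulA a) h b) ∧ g*a*h = b ∧ h*a*g = b := by
  obtain ⟨h, hh, ghb⟩ := Hb_rinv hs hab hba hg
  obtain ⟨h', hh', hh'b⟩ := Hb_rinv hs hab hba hh
  have hA := hA_var (S := S) a
  have hbi : mulA a b b = b := hba.symm
  have hgb : g*a*b = g := idem_right_id hA hbi hg.2.1
  have hhb : h*a*b = h := idem_right_id hA hbi hh.2.1
  have hgh : h*a*g = b := by
    calc h*a*g = h*a*(g*a*b) := by rw [hgb]
      _ = h*a*(g*a*(h*a*h')) := by rw [hh'b]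
      _ = (h*a*(g*a*h))*a*h' := by simp only [mul_assoc]
      _ = (h*a*b)*a*h' := by rw [ghb]
      _ = h*a*h' := by rw [hhb]
      _ = b := hh'b
  exact ⟨h, hh, ghb, hgh⟩

end Core3

section Types
variable {S : Type u} [Semigroup S]

def UtyD (a b : S) : Type u := {e : S // e*a*e = e ∧ grLo (mulA a) e b}
def VtyD (a b : S) : Type u := {f : S // f*a*f = f ∧ grRo (mulA a) f b}
def GtyD (a b : S) : Type u := {g : S // grRo (mulA a) g b ∧ grLo (mulA a) g b}

instance UtyD.instSemigroup (a b : S) : Semigroup (UtyD a b) where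
  mul e f := ⟨e.1*a*f.1, by rw [UU_mul f.2.1 e.2.2 f.2.2]; exact e.2⟩
  mul_assoc e f g := Subtype.ext (by
    show (e.1*a*f.1)*a*g.1 = e.1*a*(f.1*a*g.1)
    simp only [mul_assoc])

instance VtyD.instSemigroup (a b : S) : Semigroup (VtyD a b) where
  mul f g := ⟨f.1*a*g.1, by rw [VV_mul f.2.1 f.2.2 g.2.2]; exact g.2⟩
  mul_assoc e f g := Subtype.ext (by
    show (e.1*a*f.1)*a*g.1 = e.1*a*(f.1*a*g.1)
    simp only [mul_assoc])

theorem UtyD.left_zero (a b : S) (e f : UtyD a b) : e * f = e :=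
  Subtype.ext (UU_mul f.2.1 e.2.2 f.2.2)

theorem VtyD.right_zero (a b : S) (f g : VtyD a b) : f * g = g :=
  Subtype.ext (VV_mul f.2.1 f.2.2 g.2.2)

noncomputable def GtyD.group {a b : S} (hs : StableOp (fun u v : S => u * v))
    (hab : a = a * b * a) (hba : b = b * a * b) : Group (GtyD a b) :=
  letI m : Mul (GtyD a b) := ⟨fun g h => ⟨g.1*a*h.1, Hb_mul hs hab hba g.2 h.2⟩⟩
  letI o : One (GtyD a b) := ⟨⟨b, grRo_refl b, grLo_refl b⟩⟩
  letI i : Inv (GtyD a b) :=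
    ⟨fun g => ⟨(Hb_inv hs hab hba g.2).choose, (Hb_inv hs hab hba g.2).choose_spec.1⟩⟩
  Group.ofLeftAxioms
    (fun g h k => Subtype.ext (by
      show (g.1*a*h.1)*a*k.1 = g.1*a*(h.1*a*k.1)
      simp only [mul_assoc]))
    (fun g => Subtype.ext (show b*a*g.1 = g.1 from
      idem_left_id (hA_var a) hba.symm g.2.1.1))
    (fun g => Subtype.ext ((Hb_inv hs hab hba g.2).choose_spec.2.2))

end Types

set_option maxHeartbeats 1600000 in
/-- Let `S` be a stable semigroup, `a ∈ S` regular and `b ∈ V(a)`.  Then: (1) the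
`J^a`-class of `b` equals the `D^a`-class of `b`; (2) the idempotents of `S^a` in this
class are exactly `V(a)`, which is closed under `⋆_a` and satisfies `x ⋆_a y ⋆_a x = x`
(a rectangular band); (3) this class is closed under `⋆_a` and is a rectangular group. -/
theorem Ja_class_of_inverse_is_rectangular_group {S : Type u} [Semigroup S]
    (hstable : StableOp (fun u v : S => u * v))
    (a b : S) (hab : a = a * b * a) (hba : b = b * a * b) :
    ({x : S | grJo (fun u v : S => u * a * v) b x}
        = {x : S | grDo (fun u v : S => u * a * v) b x}) ∧
    ({x : S | grJo (fun u v : S => u * a * v) b x ∧ x = x * a * x}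
        = {x : S | a = a * x * a ∧ x = x * a * x}) ∧
    (∀ x, (a = a * x * a ∧ x = x * a * x) → ∀ y, (a = a * y * a ∧ y = y * a * y) →
      (a = a * (x * a * y) * a ∧ (x * a * y) = (x * a * y) * a * (x * a * y))) ∧
    (∀ x, (a = a * x * a ∧ x = x * a * x) → ∀ y, (a = a * y * a ∧ y = y * a * y) →
      x * a * y * a * x = x) ∧
    (∀ x y : S, grJo (fun u v : S => u * a * v) b x →
      grJo (fun u v : S => u * a * v) b y →
      grJo (fun u v : S => u * a * v) b (x * a * y)) ∧
    (∃ T : Subsemigroup (Variant S a),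
      (∀ x : S, Variant.of a x ∈ T ↔ grJo (fun u v : S => u * a * v) b x) ∧
      IsRectangularGroup ↥T) := by
  classical
  have hA := hA_var (S := S) a
  have hsA := stable_var hstable a
  have hbidem : mulA a b b = b := hba.symm
  refine ⟨?_, ?_, ?_, ?_, ?_, ?_⟩
  · ext x
    exact ⟨fun h => stable_J_to_D hA hsA h, fun h => D_to_J hA h⟩
  · ext x
    simp only [Set.mem_setOf_eq]
    exact ⟨fun h => ⟨idem_in_V hstable hab hba h.1.1 h.2, h.2⟩,
           fun h => ⟨V_in_class hstable hab hba h.1 h.2, h.2⟩⟩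
  · exact fun x hx y hy => V_closed hstable hab hba hx hy
  · exact fun x hx y hy => V_band hstable hab hba hx hy
  · exact fun x y hx hy => class_closed hstable hab hba hx hy
  · -- the rectangular group part
    letI grp : Group (GtyD a b) := GtyD.group hstable hab hba
    have hmulinv : ∀ g : GtyD a b, g.1*a*(g⁻¹).1 = b :=
      fun g => congrArg Subtype.val (mul_inv_cancel g)
    have hinvmul : ∀ g : GtyD a b, (g⁻¹).1*a*g.1 = b :=
      fun g => congrArg Subtype.val (inv_mul_cancel g)
    have hHb : ∀ x : S, grJo (mulA a) b x →
        grRo (mulA a) (b*a*x*a*b) b ∧ grLo (mulA a) (b*a*x*a*b) b := by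
      intro x hx
      obtain ⟨e, f, -, -, hg0, -, -, -, -⟩ := class_struct hstable hab hba hx
      exact hg0
    have memU : ∀ x gi : S, grJo (mulA a) b x → (b*a*x*a*b)*a*gi = b →
        ∃ e, x*a*b*a*gi = e ∧ (e*a*e = e ∧ grLo (mulA a) e b) ∧ e*a*x = x := by
      intro x gi hx hgi
      obtain ⟨e, f, ⟨hei, heL⟩, -, -, hex, -, heg, -⟩ := class_struct hstable hab hba hx
      have heb : e*a*b = e := idem_right_id hA hbidem heL.1
      refine ⟨e, ?_, ⟨hei, heL⟩, hex⟩
      calc x*a*b*a*gi = (e*a*(b*a*x*a*b))*a*gi := by rw [heg]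
        _ = e*a*((b*a*x*a*b)*a*gi) := by simp only [mul_assoc]
        _ = e*a*b := by rw [hgi]
        _ = e := heb
    have memV : ∀ x gi : S, grJo (mulA a) b x → gi*a*(b*a*x*a*b) = b →
        ∃ f, gi*a*(b*a*x) = f ∧ (f*a*f = f ∧ grRo (mulA a) f b) ∧
          (b*a*x*a*b)*a*f = b*a*x := by
      intro x gi hx hgi
      obtain ⟨e, f, -, ⟨hfi, hfR⟩, -, -, hxf, -, hg0f⟩ := class_struct hstable hab hba hx
      have hbf : b*a*f = f := idem_left_id hA hbidem hfR.1
      refine ⟨f, ?_, ⟨hfi, hfR⟩, hg0f⟩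
      calc gi*a*(b*a*x) = gi*a*((b*a*x*a*b)*a*f) := by rw [hg0f]
        _ = (gi*a*(b*a*x*a*b))*a*f := by simp only [mul_assoc]
        _ = b*a*f := by rw [hgi]
        _ = f := hbf
    have memUP : ∀ (x : S), grJo (mulA a) b x → ∀ gi : S,
        (b*a*x*a*b)*a*gi = b →
        (x*a*b*a*gi)*a*(x*a*b*a*gi) = x*a*b*a*gi ∧ grLo (mulA a) (x*a*b*a*gi) b := by
      intro x hx gi hgi
      obtain ⟨e, he1, he2, -⟩ := memU x gi hx hgi
      rw [he1]; exact he2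
    have memVP : ∀ (x : S), grJo (mulA a) b x → ∀ gi : S,
        gi*a*(b*a*x*a*b) = b →
        (gi*a*(b*a*x))*a*(gi*a*(b*a*x)) = gi*a*(b*a*x) ∧
          grRo (mulA a) (gi*a*(b*a*x)) b := by
      intro x hx gi hgi
      obtain ⟨f, hf1, hf2, -⟩ := memV x gi hx hgi
      rw [hf1]; exact hf2
    let gmk : ∀ x : S, grJo (mulA a) b x → GtyD a b := fun x hx => ⟨b*a*x*a*b, hHb x hx⟩
    refine ⟨⟨{x : Variant S a | grJo (mulA a) b x}, ?_⟩, fun x => Iff.rfl, ?_⟩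
    · exact fun {x y} hx hy => class_closed hstable hab hba hx hy
    · refine ⟨{ U := UtyD a b, V := VtyD a b, G := GtyD a b,
                    left_zero := UtyD.left_zero a b,
                    right_zero := VtyD.right_zero a b,
                    iso := MulEquiv.symm
                      { toFun := fun t =>
                          ⟨(t.1.1*a*t.2.2.1*a*t.2.1.1 : Variant S a),
                           class_closed hstable hab hba
                             (class_closed hstable hab hba
                               (grJo_symm (grJo_of_grLo t.1.2.2))
                               (grJo_symm (grJo_of_grRo t.2.2.2.1)))
                             (grJo_symm (grJo_of_grRo t.2.1.2.2))⟩,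
                        invFun := fun s =>
                          (⟨(Variant.val s.1)*a*b*a*((gmk (Variant.val s.1) s.2)⁻¹).1,
                             memUP (Variant.val s.1) s.2 _ (hmulinv (gmk (Variant.val s.1) s.2))⟩,
                           ⟨((gmk (Variant.val s.1) s.2)⁻¹).1*a*(b*a*(Variant.val s.1)),
                             memVP (Variant.val s.1) s.2 _ (hinvmul (gmk (Variant.val s.1) s.2))⟩,
                           gmk (Variant.val s.1) s.2),
                        left_inv := ?_,
                        right_inv := ?_,
                        map_mul' := ?_ } }⟩
      · -- left_inv
        rintro ⟨e, f, g⟩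
        have hbe : b*a*e.1 = b := idem_right_id hA e.2.1 e.2.2.2
        have heb : e.1*a*b = e.1 := idem_right_id hA hbidem e.2.2.1
        have hfb : f.1*a*b = b := idem_left_id hA f.2.1 f.2.2.2
        have hbf : b*a*f.1 = f.1 := idem_left_id hA hbidem f.2.2.1
        have hbg : b*a*g.1 = g.1 := idem_left_id hA hbidem g.2.1.1
        have hgb : g.1*a*b = g.1 := idem_right_id hA hbidem g.2.2.1
        have hgval : b*a*(e.1*a*g.1*a*f.1)*a*b = g.1 := by
          calc b*a*(e.1*a*g.1*a*f.1)*a*b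
              = ((b*a*e.1)*a*g.1)*a*(f.1*a*b) := by simp only [mul_assoc]
            _ = (b*a*g.1)*a*(f.1*a*b) := by rw [hbe]
            _ = (b*a*g.1)*a*b := by rw [hfb]
            _ = g.1*a*b := by rw [hbg]
            _ = g.1 := hgb
        have keyU : ∀ G0 : GtyD a b, G0.1 = b*a*(e.1*a*g.1*a*f.1)*a*b →
            (e.1*a*g.1*a*f.1)*a*b*a*(G0⁻¹).1 = e.1 := by
          intro G0 hG0
          have hG0g : G0 = g := Subtype.ext (hG0.trans hgval)
          rw [hG0g]
          calc (e.1*a*g.1*a*f.1)*a*b*a*(g⁻¹).1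
              = (e.1*a*g.1)*a*((f.1*a*b)*a*(g⁻¹).1) := by simp only [mul_assoc]
            _ = (e.1*a*g.1)*a*(b*a*(g⁻¹).1) := by rw [hfb]
            _ = e.1*a*((g.1*a*b)*a*(g⁻¹).1) := by simp only [mul_assoc]
            _ = e.1*a*(g.1*a*(g⁻¹).1) := by rw [hgb]
            _ = e.1*a*b := by rw [hmulinv g]
            _ = e.1 := heb
        have keyV : ∀ G0 : GtyD a b, G0.1 = b*a*(e.1*a*g.1*a*f.1)*a*b →
            (G0⁻¹).1*a*(b*a*(e.1*a*g.1*a*f.1)) = f.1 := by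
          intro G0 hG0
          have hG0g : G0 = g := Subtype.ext (hG0.trans hgval)
          rw [hG0g]
          calc (g⁻¹).1*a*(b*a*(e.1*a*g.1*a*f.1))
              = (g⁻¹).1*a*(((b*a*e.1)*a*g.1)*a*f.1) := by simp only [mul_assoc]
            _ = (g⁻¹).1*a*((b*a*g.1)*a*f.1) := by rw [hbe]
            _ = (g⁻¹).1*a*(g.1*a*f.1) := by rw [hbg]
            _ = ((g⁻¹).1*a*g.1)*a*f.1 := by simp only [mul_assoc]
            _ = b*a*f.1 := by rw [hinvmul g]
            _ = f.1 := hbf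
        refine Prod.ext (Subtype.ext (keyU _ rfl)) (Prod.ext (Subtype.ext (keyV _ rfl)) ?_)
        exact Subtype.ext hgval
      · -- right_inv
        intro s
        have key2 : ∀ gi : S, (b*a*(Variant.val s.1)*a*b)*a*gi = b →
            gi*a*(b*a*(Variant.val s.1)*a*b) = b →
            ((Variant.val s.1)*a*b*a*gi)*a*(b*a*(Variant.val s.1)*a*b)*a*(gi*a*(b*a*(Variant.val s.1)))
              = Variant.val s.1 := by
          intro gi h1 h2
          obtain ⟨e, he1, ⟨hei, heL⟩, hex⟩ := memU (Variant.val s.1) gi s.2 h1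
          obtain ⟨f, hf1, ⟨hfi, hfR⟩, hg0f⟩ := memV (Variant.val s.1) gi s.2 h2
          have heb : e*a*b = e := idem_right_id hA hbidem heL.1
          calc ((Variant.val s.1)*a*b*a*gi)*a*(b*a*(Variant.val s.1)*a*b)*a*(gi*a*(b*a*(Variant.val s.1)))
              = (e*a*(b*a*(Variant.val s.1)*a*b))*a*f := by rw [he1, hf1]
            _ = e*a*((b*a*(Variant.val s.1)*a*b)*a*f) := by simp only [mul_assoc]
            _ = e*a*(b*a*(Variant.val s.1)) := by rw [hg0f]
            _ = (e*a*b)*a*(Variant.val s.1) := by simp only [mul_assoc]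
            _ = e*a*(Variant.val s.1) := by rw [heb]
            _ = Variant.val s.1 := hex
        exact Subtype.ext (key2 _ (hmulinv (gmk (Variant.val s.1) s.2))
          (hinvmul (gmk (Variant.val s.1) s.2)))
      · -- map_mul'
        rintro ⟨e, f, g⟩ ⟨e₂, f₂, g₂⟩
        apply Subtype.ext
        have h1 : e.1*a*e₂.1 = e.1 := UU_mul e₂.2.1 e.2.2 e₂.2.2
        have h2 : f.1*a*f₂.1 = f₂.1 := VV_mul f.2.1 f.2.2 f₂.2.2
        have h3 : f.1*a*e₂.1 = b := VU_mul hstable hab hba f.2.1 f.2.2 e₂.2.1 e₂.2.2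
        have h4 : g.1*a*b = g.1 := idem_right_id hA hbidem g.2.2.1
        show (e.1*a*e₂.1)*a*(g.1*a*g₂.1)*a*(f.1*a*f₂.1)
            = (e.1*a*g.1*a*f.1)*a*(e₂.1*a*g₂.1*a*f₂.1)
        have hcalc : (e.1*a*g.1*a*f.1)*a*(e₂.1*a*g₂.1*a*f₂.1)
            = (e.1*a*e₂.1)*a*(g.1*a*g₂.1)*a*(f.1*a*f₂.1) := by
          calc (e.1*a*g.1*a*f.1)*a*(e₂.1*a*g₂.1*a*f₂.1)
              = (e.1*a*g.1)*a*((f.1*a*e₂.1)*a*(g₂.1*a*f₂.1)) := by simp only [mul_assoc]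
            _ = (e.1*a*g.1)*a*(b*a*(g₂.1*a*f₂.1)) := by rw [h3]
            _ = ((e.1*a*(g.1*a*b))*a*g₂.1)*a*f₂.1 := by simp only [mul_assoc]
            _ = ((e.1*a*g.1)*a*g₂.1)*a*f₂.1 := by rw [h4]
            _ = (e.1*a*e₂.1)*a*(g.1*a*g₂.1)*a*(f.1*a*f₂.1) := by
                rw [h1, h2]; simp only [mul_assoc]
        exact hcalc.symm
end

section
/- Let S be a semigroup, a ∈ S, and define RI(a) = {b ∈ S : x = x·a·b for all x ∈ S}. Then: (1) if RI(a) is nonempty (a is right-invertible), then V(a) = Pre(a) ⊆ RI(a) ⊆ Post(a); (2) if moreover a is regular, then V(a) = Pre(a) = RI(a) ⊆ Post(a). -/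
universe u

/-- The set `Pre(a)` of pre-inverses of `a`: those `x` with `a = a·x·a`. -/
def preSet {S : Type u} [Mul S] (a : S) : Set S := {x | a = a * x * a}

/-- The set `Post(a)` of post-inverses of `a`: those `x` with `x = x·a·x`. -/
def postSet {S : Type u} [Mul S] (a : S) : Set S := {x | x = x * a * x}

/-- The set `V(a) = Pre(a) ∩ Post(a)` of inverses of `a`. -/
def vSet {S : Type u} [Mul S] (a : S) : Set S := preSet a ∩ postSet a

/-- The set `RI(a)` of right-inverses of `a`: those `b` with `x = x·a·b` for all `x`. -/
def riSet {S : Type u} [Mul S] (a : S) : Set S := {b | ∀ x : S, x = x * a * b}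

/-- Let `a ∈ S`.  (1) If `a` is right-invertible (`RI(a)` nonempty), then
`V(a) = Pre(a) ⊆ RI(a) ⊆ Post(a)`.  (2) If moreover `a` is regular, then
`V(a) = Pre(a) = RI(a) ⊆ Post(a)`. -/
theorem right_invertible_inverses {S : Type u} [Semigroup S] (a : S) :
    ((riSet a).Nonempty →
      vSet a = preSet a ∧ preSet a ⊆ riSet a ∧ riSet a ⊆ postSet a) ∧
    ((riSet a).Nonempty → (∃ u, a = a * u * a) →
      vSet a = preSet a ∧ preSet a = riSet a ∧ riSet a ⊆ postSet a) := by
  have hri_post : riSet a ⊆ postSet a := fun b hb => hb b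
  have hpre_ri : (riSet a).Nonempty → preSet a ⊆ riSet a := by
    rintro ⟨b, hb⟩ x hx y
    calc y = y * a * b := hb y
      _ = y * (a * x * a) * b := by rw [← hx]
      _ = (y * a * x) * a * b := by simp only [mul_assoc]
      _ = y * a * x := (hb (y * a * x)).symm
  have hveq : (riSet a).Nonempty → vSet a = preSet a := by
    intro hne
    apply Set.eq_of_subset_of_subset Set.inter_subset_left
    intro x hx
    exact ⟨hx, hri_post (hpre_ri hne hx)⟩
  refine ⟨fun hne => ⟨hveq hne, hpre_ri hne, hri_post⟩, fun hne ⟨u, hu⟩ => ⟨hveq hne, ?_, hri_post⟩⟩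
  apply Set.eq_of_subset_of_subset (hpre_ri hne)
  intro b hb
  show a = a * b * a
  calc a = a * u * a := hu
    _ = (a * u * a * b) * a := by rw [← hb (a * u)]
    _ = a * b * a := by rw [← hu]
end

section
/- Let T be a semigroup, let J be a maximal J-class of T (i.e., J is the J-class of some element, and for all z ∈ J and y ∈ T, z ≤_J y implies y ≤_J z), and suppose every element z ∈ J is stable in the sense that z J z·u implies z R z·u for all u ∈ T. Then every generating subset X of T (a subset whose generated subsemigroup is all of T) contains at least one element from each R-class contained in J; in particular, any generating set of T has at least as many elements as there are R-classes in J. -/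
universe u

/-!
A generator `x` of which an element `z` of `J` is a prefix, `z = x * u`, lies above `z` in the
`J`-order, hence in `J` by maximality; stability of `x` then turns `x J x * u` into `x R z`.
Since every element of `T` is a generator followed by a (possibly empty) product, each
`R`-class in `J` contains a generator, and distinct `R`-classes are disjoint.
-/

theorem cardinal_mk_le_of_pairwiseDisjoint_of_inter_nonempty {α : Type u} {S : Set (Set α)}
    {X : Set α} (hdisj : S.PairwiseDisjoint id) (hmeet : ∀ C ∈ S, (C ∩ X).Nonempty) :
    Cardinal.mk S ≤ Cardinal.mk X := by
  choose f hf using fun C : S => hmeet C C.2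
  refine Cardinal.mk_le_of_injective (f := fun C => ⟨f C, (hf C).2⟩) fun C₁ C₂ hC => ?_
  have hfC : f C₁ = f C₂ := congrArg Subtype.val hC
  have hf₁ : f C₁ ∈ (C₂ : Set α) := hfC ▸ (hf C₂).1
  by_contra hne
  exact Set.disjoint_left.mp (hdisj C₁.2 C₂.2 (Subtype.coe_ne_coe.mpr hne)) (hf C₁).1 hf₁

section Green

variable {T : Type u} [Semigroup T]

theorem leJ_iff_exists_withOne {x y : T} :
    leJ x y ↔ ∃ a b : WithOne T, (x : WithOne T) = a * (y : WithOne T) * b := by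
  constructor
  · rintro (rfl | ⟨a, rfl⟩ | ⟨b, rfl⟩ | ⟨a, b, rfl⟩)
    · exact ⟨1, 1, by simp⟩
    · exact ⟨a, 1, by simp [WithOne.coe_mul]⟩
    · exact ⟨1, b, by simp [WithOne.coe_mul]⟩
    · exact ⟨a, b, by simp [WithOne.coe_mul]⟩
  · rintro ⟨a, b, h⟩
    induction a using WithOne.recOneCoe <;> induction b using WithOne.recOneCoe <;>
      simp only [one_mul, mul_one, ← WithOne.coe_mul, WithOne.coe_inj] at h
    · exact Or.inl h
    · exact Or.inr (Or.inr (Or.inl ⟨_, h⟩))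
    · exact Or.inr (Or.inl ⟨_, h⟩)
    · exact Or.inr (Or.inr (Or.inr ⟨_, _, h⟩))

theorem leJ_trans {x y z : T} (hxy : leJ x y) (hyz : leJ y z) : leJ x z := by
  rw [leJ_iff_exists_withOne] at *
  obtain ⟨a, b, hx⟩ := hxy
  obtain ⟨c, d, hy⟩ := hyz
  exact ⟨a * c, d * b, by rw [hx, hy]; noncomm_ring⟩

theorem grJ_trans {x y z : T} (hxy : grJ x y) (hyz : grJ y z) : grJ x z :=
  ⟨leJ_trans hxy.1 hyz.1, leJ_trans hyz.2 hxy.2⟩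

theorem leR_trans {x y z : T} (hxy : leR x y) (hyz : leR y z) : leR x z := by
  rcases hxy with rfl | ⟨a, rfl⟩ <;> rcases hyz with rfl | ⟨b, rfl⟩
  · exact Or.inl rfl
  · exact Or.inr ⟨b, rfl⟩
  · exact Or.inr ⟨a, rfl⟩
  · exact Or.inr ⟨b * a, mul_assoc _ _ _⟩

theorem grR_refl (x : T) : grR x x := ⟨Or.inl rfl, Or.inl rfl⟩

theorem grR_symm {x y : T} (h : grR x y) : grR y x := ⟨h.2, h.1⟩

theorem grR_trans {x y z : T} (hxy : grR x y) (hyz : grR y z) : grR x z :=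
  ⟨leR_trans hxy.1 hyz.1, leR_trans hyz.2 hxy.2⟩

theorem leJ_of_leR {x y : T} (h : leR x y) : leJ x y :=
  h.elim Or.inl fun h => Or.inr (Or.inr (Or.inl h))

theorem pairwiseDisjoint_rClasses (J : Set T) :
    {C : Set T | ∃ z ∈ J, C = {y | grR z y}}.PairwiseDisjoint id := by
  rintro _ ⟨z₁, -, rfl⟩ _ ⟨z₂, -, rfl⟩ hne
  refine Set.disjoint_left.mpr fun y hy₁ hy₂ => hne ?_
  ext w
  exact ⟨fun hw => grR_trans hy₂ (grR_trans (grR_symm hy₁) hw),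
    fun hw => grR_trans hy₁ (grR_trans (grR_symm hy₂) hw)⟩

theorem exists_mem_leR_of_mem_closure {X : Set T} {w : T} (hw : w ∈ Subsemigroup.closure X) :
    ∃ x ∈ X, leR w x := by
  induction hw using Subsemigroup.closure_induction with
  | mem x hx => exact ⟨x, hx, Or.inl rfl⟩
  | mul a b _ _ iha _ =>
    obtain ⟨x, hx, hax⟩ := iha
    exact ⟨x, hx, leR_trans (Or.inr ⟨b, rfl⟩) hax⟩

theorem grR_of_leR_of_mem_maximal_stable_jClass {d z x : T} {J : Set T}
    (hJ : J = {y | grJ d y}) (hmax : ∀ z ∈ J, ∀ y : T, leJ z y → leJ y z)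
    (hstab : ∀ z ∈ J, ∀ u : T, grJ z (z * u) → grR z (z * u)) (hz : z ∈ J) (hzx : leR z x) :
    grR z x := by
  obtain rfl | ⟨u, rfl⟩ := hzx
  · exact grR_refl z
  have hle : leJ (x * u) x := leJ_of_leR (Or.inr ⟨u, rfl⟩)
  have hxz : grJ x (x * u) := ⟨hmax _ hz _ hle, hle⟩
  have hx : x ∈ J := by
    rw [hJ] at hz ⊢
    exact grJ_trans hz ⟨hxz.2, hxz.1⟩
  exact grR_symm (hstab x hx u hxz)

end Green

/-- Let `J` be a maximal `J`-class of a semigroup `T`, all of whose elements `z` are stable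
(`z J z·u → z R z·u`).  Then every generating subset `X` of `T` meets every `R`-class
contained in `J`; in particular `X` has at least as many elements as there are `R`-classes
in `J`. -/
theorem generating_set_meets_maximal_Jclass {T : Type u} [Semigroup T]
    (d : T) (J : Set T) (hJ : J = {y | grJ d y})
    (hmax : ∀ z ∈ J, ∀ y : T, leJ z y → leJ y z)
    (hstab : ∀ z ∈ J, ∀ u : T, grJ z (z * u) → grR z (z * u))
    (X : Set T) (hX : Subsemigroup.closure X = ⊤) :
    (∀ z ∈ J, ∃ x ∈ X, grR z x) ∧
    Cardinal.mk ↥{C : Set T | ∃ z ∈ J, C = {y | grR z y}} ≤ Cardinal.mk ↥X := by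
  have hmeet (z : T) (hz : z ∈ J) : ∃ x ∈ X, grR z x := by
    obtain ⟨x, hx, hzx⟩ := exists_mem_leR_of_mem_closure (hX ▸ Subsemigroup.mem_top z)
    exact ⟨x, hx, grR_of_leR_of_mem_maximal_stable_jClass hJ hmax hstab hz hzx⟩
  refine ⟨hmeet, cardinal_mk_le_of_pairwiseDisjoint_of_inter_nonempty
    (pairwiseDisjoint_rClasses J) ?_⟩
  rintro _ ⟨z, hz, rfl⟩
  obtain ⟨x, hx, hzx⟩ := hmeet z hz
  exact ⟨x, hzx, hx⟩
end
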